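/- arXiv:math/0604499 — 7 statements merged into one kernel-verified Lean document; each statement's English description precedes it below -/
import Mathlib

section
/- For any finite simple graph G with at least one vertex, χ(G) ≤ (1/2)(ω(G) + |G| - α(G) + 1). -/
set_option linter.unusedSectionVars false

open SimpleGraph

section Aux

universe u

variable {V : Type u} [Fintype V]

private lemma aux_toNat_chrom_le {G : SimpleGraph V} {m : ℕ} (h : G.Colorable m) :
    G.chromaticNumber.toNat ≤ m :=
  ENat.toNat_le_of_le_coe h.chromaticNumber_le

/-- Coloring extension: if the complement of `t` is independent and the induced graph on `t`
is `m`-colorable, then `G` is `(m+1)`-colorable. -/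
private lemma aux_colorable_extend (G : SimpleGraph V) (t : Finset V) {m : ℕ}
    (hind : ∀ a b : V, a ∉ t → b ∉ t → ¬ G.Adj a b)
    (h : (G.induce (↑t : Set V)).Colorable m) : G.Colorable (m + 1) := by
  classical
  obtain ⟨C⟩ := h
  refine ⟨Coloring.mk
    (fun v => if hv : v ∈ t then (C ⟨v, hv⟩).castSucc else Fin.last m) ?_⟩
  intro a b hab
  by_cases ha : a ∈ t <;> by_cases hb : b ∈ t
  · simp only [ha, hb, dif_pos]
    intro hcontr
    exact C.valid (show (G.induce (↑t : Set V)).Adj ⟨a, ha⟩ ⟨b, hb⟩ from hab)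
      (Fin.castSucc_injective _ hcontr)
  · simp only [ha, hb, dif_pos, dif_neg, not_false_iff]
    exact Fin.ne_of_lt (Fin.castSucc_lt_last _)
  · simp only [ha, hb, dif_pos, dif_neg, not_false_iff]
    exact (Fin.ne_of_lt (Fin.castSucc_lt_last _)).symm
  · exact absurd hab (hind a b ha hb)

/-- If `S` is independent, color `S` with one color and everything else distinctly. -/
private lemma aux_colorable_indep (G : SimpleGraph V) (S : Finset V)
    (hS : ∀ a ∈ S, ∀ b ∈ S, ¬ G.Adj a b) :
    G.Colorable (Fintype.card V - S.card + 1) := by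
  classical
  have C : G.Coloring (Option {x : V // x ∉ S}) := by
    refine Coloring.mk (fun v => if h : v ∈ S then none else some ⟨v, h⟩) ?_
    intro a b hab
    by_cases ha : a ∈ S <;> by_cases hb : b ∈ S
    · exact absurd hab (hS a ha b hb)
    · simp [ha, hb]
    · simp [ha, hb]
    · simp only [ha, hb, dif_neg, not_false_iff]
      exact fun h => G.ne_of_adj hab (by simpa using h)
  have h := C.colorable
  rwa [Fintype.card_option, Fintype.card_subtype_compl, Fintype.card_coe] at h

/-- If `S` is independent and every vertex of `S` has a non-neighbor outside `S`,
then `G` can be colored with `|V| - |S|` colors (using the outside vertices as colors). -/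
private lemma aux_colorable_split (G : SimpleGraph V) (S : Finset V)
    (hS : ∀ a ∈ S, ∀ b ∈ S, ¬ G.Adj a b)
    (hout : ∀ s ∈ S, ∃ v, v ∉ S ∧ ¬ G.Adj s v) :
    G.Colorable (Fintype.card V - S.card) := by
  classical
  choose f hf1 hf2 using hout
  have C : G.Coloring {x : V // x ∉ S} := by
    refine Coloring.mk (fun v => if h : v ∈ S then ⟨f v h, hf1 v h⟩ else ⟨v, h⟩) ?_
    intro a b hab
    by_cases ha : a ∈ S <;> by_cases hb : b ∈ S
    · exact absurd hab (hS a ha b hb)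
    · simp only [ha, hb, dif_pos, dif_neg, not_false_iff, ne_eq, Subtype.mk.injEq]
      intro hcontr; exact hf2 a ha (hcontr ▸ hab)
    · simp only [ha, hb, dif_pos, dif_neg, not_false_iff, ne_eq, Subtype.mk.injEq]
      intro hcontr; exact hf2 b hb (hcontr ▸ hab.symm)
    · simp only [ha, hb, dif_neg, not_false_iff, ne_eq, Subtype.mk.injEq]
      exact G.ne_of_adj hab
  have h := C.colorable
  rwa [Fintype.card_subtype_compl, Fintype.card_coe] at h

/-- The key inequality in `ℕ`: `2χ + α ≤ ω + n + 1`. -/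
private lemma aux_key (n : ℕ) : ∀ (V : Type u) [Fintype V] (G : SimpleGraph V),
    Fintype.card V ≤ n →
    2 * G.chromaticNumber.toNat + Gᶜ.cliqueNum ≤ G.cliqueNum + Fintype.card V + 1 := by
  induction n with
  | zero =>
    intro V _ G hV
    haveI : IsEmpty V := Fintype.card_eq_zero_iff.mp (Nat.le_zero.mp hV)
    have h1 : G.chromaticNumber.toNat = 0 := by
      rw [G.chromaticNumber_eq_zero_of_isEmpty]; rfl
    have h2 : Gᶜ.cliqueNum = 0 := by
      obtain ⟨s, hs⟩ := Gᶜ.exists_isNClique_cliqueNum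
      have h3 := s.card_le_univ
      have h4 := hs.card_eq
      omega
    omega
  | succ n ih =>
    intro V _ G hV
    classical
    obtain ⟨S, hS⟩ := Gᶜ.exists_isNClique_cliqueNum
    have hScard : S.card = Gᶜ.cliqueNum := hS.card_eq
    have hind : ∀ a ∈ S, ∀ b ∈ S, ¬ G.Adj a b := by
      intro a ha b hb hab
      rcases eq_or_ne a b with rfl | hne
      · exact G.irrefl hab
      · exact (hS.isClique (Finset.mem_coe.mpr ha) (Finset.mem_coe.mpr hb) hne).2 hab
    by_cases hB : ∃ u v : V, u ∉ S ∧ v ∉ S ∧ u ≠ v ∧ ¬ G.Adj u v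
    · obtain ⟨u, v, hu, hv, huv, hnadj⟩ := hB
      set t : Finset V := ({u, v} : Finset V)ᶜ with ht
      have hcard2 : ({u, v} : Finset V).card = 2 := Finset.card_pair huv
      have hVcard : 2 ≤ Fintype.card V := by
        have h := Finset.card_le_univ ({u, v} : Finset V)
        rw [hcard2] at h
        exact h
      have htcard : Fintype.card ↥(↑t : Set V) = Fintype.card V - 2 := by
        simp only [Finset.coe_sort_coe, Fintype.card_coe, ht, Finset.card_compl, hcard2]
      have hIH := ih ↥(↑t : Set V) (G.induce (↑t : Set V)) (by rw [htcard]; omega)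
      rw [htcard] at hIH
      -- χ(G) ≤ χ(G') + 1
      have hchi : G.chromaticNumber.toNat ≤
          (G.induce (↑t : Set V)).chromaticNumber.toNat + 1 := by
        refine aux_toNat_chrom_le (aux_colorable_extend G t ?_
          (colorable_chromaticNumber_of_fintype _))
        intro a b hat hbt hadj
        rw [ht, Finset.mem_compl, not_not, Finset.mem_insert, Finset.mem_singleton] at hat hbt
        rcases hat with rfl | rfl <;> rcases hbt with rfl | rfl
        · exact G.irrefl hadj
        · exact hnadj hadj
        · exact hnadj hadj.symm
        · exact G.irrefl hadj
      -- ω(G') ≤ ω(G)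
      have homega : (G.induce (↑t : Set V)).cliqueNum ≤ G.cliqueNum := by
        obtain ⟨s', hs'⟩ := (G.induce (↑t : Set V)).exists_isNClique_cliqueNum
        have himg : G.IsClique ↑(s'.image Subtype.val) := by
          rw [Finset.coe_image]
          intro x hx y hy hxy
          obtain ⟨x', hx', rfl⟩ := hx
          obtain ⟨y', hy', rfl⟩ := hy
          have hne' : x' ≠ y' := fun h => hxy (congrArg _ h)
          exact hs'.isClique hx' hy' hne'
        have hcardimg : (s'.image Subtype.val).card = (G.induce (↑t : Set V)).cliqueNum := by
          rw [Finset.card_image_of_injective _ Subtype.val_injective, hs'.card_eq]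
        calc (G.induce (↑t : Set V)).cliqueNum = (s'.image Subtype.val).card := hcardimg.symm
          _ ≤ G.cliqueNum := himg.card_le_cliqueNum
      -- α(G) ≤ α(G')
      have halpha : Gᶜ.cliqueNum ≤ (G.induce (↑t : Set V))ᶜ.cliqueNum := by
        set S' : Finset ↥(↑t : Set V) := S.subtype (fun x => x ∈ (↑t : Set V)) with hS'def
        have hSsub : ∀ x ∈ S, x ∈ (↑t : Set V) := by
          intro x hx
          simp only [ht, Finset.coe_compl, Set.mem_compl_iff, Finset.mem_coe,
            Finset.mem_insert, Finset.mem_singleton]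
          rintro (rfl | rfl)
          · exact hu hx
          · exact hv hx
        have hS'card : S'.card = S.card := by
          rw [hS'def, Finset.card_subtype, Finset.filter_true_of_mem (fun x hx => hSsub x hx)]
        have hclq : (G.induce (↑t : Set V))ᶜ.IsClique ↑S' := by
          intro x hx y hy hxy
          have hxS : (x : V) ∈ S := by
            have := Finset.mem_coe.mp hx
            rw [hS'def, Finset.mem_subtype] at this
            exact this
          have hyS : (y : V) ∈ S := by
            have := Finset.mem_coe.mp hy
            rw [hS'def, Finset.mem_subtype] at this
            exact this
          exact ⟨hxy, hind _ hxS _ hyS⟩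
        calc Gᶜ.cliqueNum = S'.card := by rw [hS'card, hScard]
          _ ≤ _ := hclq.card_le_cliqueNum
      omega
    · push_neg at hB
      have hSle : S.card ≤ Fintype.card V := by
        exact S.card_le_univ
      have hclq : G.IsClique ↑(Sᶜ : Finset V) := by
        intro a ha b hb hab
        exact hB a b (Finset.mem_compl.mp (Finset.mem_coe.mp ha))
          (Finset.mem_compl.mp (Finset.mem_coe.mp hb)) hab
      have hScompl : (Sᶜ : Finset V).card = Fintype.card V - S.card := Finset.card_compl S
      have homega0 : Fintype.card V - S.card ≤ G.cliqueNum := by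
        have h := hclq.card_le_cliqueNum
        rwa [hScompl] at h
      by_cases hC1 : ∃ s ∈ S, ∀ w, w ∉ S → G.Adj s w
      · obtain ⟨s, hsS, hadj⟩ := hC1
        have hclq2 : G.IsClique ↑(insert s (Sᶜ : Finset V)) := by
          rw [Finset.coe_insert]
          refine hclq.insert ?_
          intro b hb hne
          exact hadj b (Finset.mem_compl.mp (Finset.mem_coe.mp hb))
        have hcard2 : (insert s (Sᶜ : Finset V)).card = Fintype.card V - S.card + 1 := by
          rw [Finset.card_insert_of_notMem (by simp [hsS]), hScompl]
        have homega1 : Fintype.card V - S.card + 1 ≤ G.cliqueNum := by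
          have h := hclq2.card_le_cliqueNum
          rwa [hcard2] at h
        have hchi : G.chromaticNumber.toNat ≤ Fintype.card V - S.card + 1 :=
          aux_toNat_chrom_le (aux_colorable_indep G S hind)
        omega
      · push_neg at hC1
        have hchi : G.chromaticNumber.toNat ≤ Fintype.card V - S.card :=
          aux_toNat_chrom_le (aux_colorable_split G S hind hC1)
        omega

end Aux

/-- `χ(G) ≤ (1/2)(ω(G) + |G| - α(G) + 1)`, where `α(G)` is the independence number,
i.e. the clique number of the complement. -/
theorem chromaticNumber_le_half_cliqueNum_add_card_sub_indepNum {V : Type*} [Fintype V]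
    [Nonempty V] (G : SimpleGraph V) :
    (G.chromaticNumber.toNat : ℝ) ≤
      (1 / 2) * ((G.cliqueNum : ℝ) + Fintype.card V - Gᶜ.cliqueNum + 1) := by
  have h := aux_key (Fintype.card V) V G le_rfl
  have h' : 2 * (G.chromaticNumber.toNat : ℝ) + (Gᶜ.cliqueNum : ℝ) ≤
      (G.cliqueNum : ℝ) + (Fintype.card V : ℝ) + 1 := by exact_mod_cast h
  linarith
end

section
/- For any finite simple graph G with at least one vertex, χ(G) ≤ (1/2)(ω(G) + |G|). -/
open SimpleGraph in
lemma key_colorable : ∀ (n : ℕ) (V : Type u) [Fintype V] [DecidableEq V] (G : SimpleGraph V),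
    Fintype.card V = n → G.Colorable ((G.cliqueNum + n) / 2) := by
  intro n
  induction n using Nat.strong_induction_on with
  | _ n ih =>
    intro V _ _ G hcard
    by_cases hcomp : ∀ u v : V, u ≠ v → G.Adj u v
    · -- complete graph: ω ≥ n
      have hclique : G.IsClique (Finset.univ : Finset V) := by
        intro x _ y _ hxy; exact hcomp x y hxy
      have hω : n ≤ G.cliqueNum := by
        have := hclique.card_le_cliqueNum
        simpa [hcard] using this
      have : G.Colorable (Fintype.card V) := G.colorable_of_fintype
      exact this.mono (by omega)
    · push_neg at hcomp
      obtain ⟨u, v, huv, hnadj⟩ := hcomp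
      set s : Set V := {u, v}ᶜ with hs
      have hn2 : 2 ≤ n := by
        rw [← hcard]
        have : ({u, v} : Finset V).card = 2 := by simp [huv]
        calc 2 = ({u, v} : Finset V).card := this.symm
          _ ≤ Fintype.card V := Finset.card_le_univ _
      have hcards : Fintype.card s = n - 2 := by
        have h2 : Fintype.card ({u, v} : Set V) = 2 := by
          simp [Set.card_insert, huv]
        have h3 := Fintype.card_compl_set ({u, v} : Set V)
        rw [h2, hcard] at h3
        simpa [hs] using h3
      set G' : SimpleGraph s := G.induce s with hG'
      obtain ⟨t, ht⟩ := G'.exists_isNClique_cliqueNum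
      have hω' : G'.cliqueNum ≤ G.cliqueNum := by
        have hmap : G.IsClique (t.map (Function.Embedding.subtype _)) := by
          intro x hx y hy hxy
          simp only [Finset.coe_map, Function.Embedding.coe_subtype, Set.mem_image,
            Finset.mem_coe] at hx hy
          obtain ⟨x', hx', rfl⟩ := hx
          obtain ⟨y', hy', rfl⟩ := hy
          have := ht.isClique hx' hy' (fun h => hxy (by rw [h]))
          exact this
        have := hmap.card_le_cliqueNum
        rwa [Finset.card_map, ht.card_eq] at this
      have hIH : G'.Colorable ((G'.cliqueNum + (n - 2)) / 2) :=
        ih (n - 2) (by omega) s G' hcards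
      obtain ⟨C⟩ := hIH
      set k := (G'.cliqueNum + (n - 2)) / 2 with hk
      have hcol : G.Colorable (k + 1) := by
        refine ⟨SimpleGraph.Coloring.mk
          (fun x => if h : x ∈ s then (C ⟨x, h⟩).castSucc else Fin.last k) ?_⟩
        intro a b hab
        by_cases ha : a ∈ s <;> by_cases hb : b ∈ s <;>
          simp only [ha, hb, dif_pos, dif_neg, not_false_iff]
        · intro h
          have : (C ⟨a, ha⟩) = (C ⟨b, hb⟩) := Fin.castSucc_injective _ h
          exact C.valid (by exact hab) this
        · exact Fin.castSucc_lt_last _ |>.ne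
        · exact (Fin.castSucc_lt_last _).ne'
        · exfalso
          simp only [hs, Set.mem_compl_iff, Set.mem_insert_iff, Set.mem_singleton_iff,
            not_not] at ha hb
          rcases ha with rfl | rfl <;> rcases hb with rfl | rfl
          · exact G.loopless.irrefl _ hab
          · exact hnadj hab
          · exact hnadj hab.symm
          · exact G.loopless.irrefl _ hab
      exact hcol.mono (by omega)

/-- `χ(G) ≤ (1/2)(ω(G) + |G|)`. -/
theorem chromaticNumber_le_half_cliqueNum_add_card {V : Type*} [Fintype V] [Nonempty V]
    (G : SimpleGraph V) :
    (G.chromaticNumber.toNat : ℝ) ≤ (1 / 2) * ((G.cliqueNum : ℝ) + Fintype.card V) := by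
  classical
  have hcol := key_colorable (Fintype.card V) V G rfl
  rw [← SimpleGraph.chromaticNumber_le_iff_colorable] at hcol
  have hχ : G.chromaticNumber.toNat ≤ (G.cliqueNum + Fintype.card V) / 2 := by
    have := ENat.toNat_le_toNat hcol (by simp)
    simpa using this
  have h2 : 2 * G.chromaticNumber.toNat ≤ G.cliqueNum + Fintype.card V := by omega
  have := (Nat.cast_le (α := ℝ)).mpr h2
  push_cast at this
  linarith
end

section
/- Let t be a real number, let G be any finite simple graph with at least one vertex, and let H be a finite simple graph with at least one vertex satisfying χ(H) ≤ (1/2)(ω(H) + Δ(H) + 1) + t. Then the join G + H satisfies χ(G + H) ≤ (1/2)(ω(G + H) + Δ(G + H) + 1) + t. -/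
/-- The join of two simple graphs: all edges within each graph plus all edges between them. -/
def SimpleGraph.join {α β : Type*} (G : SimpleGraph α) (H : SimpleGraph β) :
    SimpleGraph (α ⊕ β) where
  Adj u v := match u, v with
    | Sum.inl a, Sum.inl a' => G.Adj a a'
    | Sum.inr b, Sum.inr b' => H.Adj b b'
    | Sum.inl _, Sum.inr _ => True
    | Sum.inr _, Sum.inl _ => True
  symm := ⟨by rintro (a|b) (a'|b') h <;> first | trivial | exact h.symm⟩
  loopless := ⟨by rintro (a|b) h <;> exact SimpleGraph.irrefl _ h⟩

noncomputable instance {α β : Type*} (G : SimpleGraph α) (H : SimpleGraph β) :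
    DecidableRel (G.join H).Adj := Classical.decRel _

/-!
Every graph `G` on `n` vertices satisfies `2 χ(G) ≤ n + ω(G)`: pair up non-adjacent vertices, giving
each pair one colour, until the remaining vertices form a clique. In the join, `χ` is at most
`χ(G) + χ(H)`, while `ω` gains at least `ω(G)` and `Δ` gains `n` (a vertex of `H` of maximum degree
is adjacent to all of `G`). Hence the excess `χ - (ω + Δ + 1) / 2` of `G + H` is at most that of `H`.
-/

open Finset

namespace SimpleGraph

variable {α β : Type*}

section Join

variable (G : SimpleGraph α) (H : SimpleGraph β)

@[simp] lemma join_adj_inr_inr {b b' : β} : (G.join H).Adj (.inr b) (.inr b') ↔ H.Adj b b' :=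
  Iff.rfl

@[simp] lemma join_adj_inr_inl {a : α} {b : β} : (G.join H).Adj (.inr b) (.inl a) :=
  trivial

variable {G H} in
lemma Colorable.join {m n : ℕ} (hG : G.Colorable m) (hH : H.Colorable n) :
    (G.join H).Colorable (m + n) := by
  obtain ⟨cG⟩ := hG
  obtain ⟨cH⟩ := hH
  let c : (G.join H).Coloring (Fin m ⊕ Fin n) := Coloring.mk (Sum.map cG cH) <| by
    rintro (a | b) (a' | b') h
    · exact fun h' => cG.valid h (Sum.inl_injective h')
    · exact Sum.inl_ne_inr
    · exact Sum.inr_ne_inl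
    · exact fun h' => cH.valid h (Sum.inr_injective h')
  simpa using c.colorable

lemma chromaticNumber_join_toNat_le [Finite α] [Finite β] :
    (G.join H).chromaticNumber.toNat ≤ G.chromaticNumber.toNat + H.chromaticNumber.toNat :=
  ENat.toNat_le_of_le_natCast <| by
    exact_mod_cast (Colorable.join G.colorable_chromaticNumber_of_fintype
      H.colorable_chromaticNumber_of_fintype).chromaticNumber_le

variable {G H} in
lemma IsClique.disjSum {s : Finset α} {t : Finset β} (hs : G.IsClique (s : Set α))
    (ht : H.IsClique (t : Set β)) : (G.join H).IsClique (s.disjSum t : Set (α ⊕ β)) := by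
  rintro (a | b) hx (a' | b') hy hne <;>
    simp only [mem_coe, inl_mem_disjSum, inr_mem_disjSum] at hx hy
  · exact hs hx hy (by rintro rfl; exact hne rfl)
  · trivial
  · trivial
  · exact ht hx hy (by rintro rfl; exact hne rfl)

lemma cliqueNum_add_cliqueNum_le_cliqueNum_join [Finite α] [Finite β] :
    G.cliqueNum + H.cliqueNum ≤ (G.join H).cliqueNum := by
  obtain ⟨s, hs⟩ := G.exists_isNClique_cliqueNum
  obtain ⟨t, ht⟩ := H.exists_isNClique_cliqueNum
  have := (hs.isClique.disjSum ht.isClique).card_le_cliqueNum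
  rwa [card_disjSum, hs.card_eq, ht.card_eq] at this

lemma neighborFinset_join_inr [Fintype α] [Fintype β] [DecidableRel H.Adj] (b : β) :
    (G.join H).neighborFinset (.inr b) = univ.disjSum (H.neighborFinset b) := by
  ext (a | b') <;> simp

lemma card_add_maxDegree_le_maxDegree_join [Fintype α] [Fintype β] [Nonempty β]
    [DecidableRel H.Adj] : Fintype.card α + H.maxDegree ≤ (G.join H).maxDegree := by
  obtain ⟨b, hb⟩ := H.exists_maximal_degree_vertex
  have := (G.join H).degree_le_maxDegree (.inr b)
  rwa [← card_neighborFinset_eq_degree, neighborFinset_join_inr, card_disjSum, card_univ,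
    card_neighborFinset_eq_degree, ← hb] at this

end Join

section Pairing

variable {G : SimpleGraph α}

lemma Colorable.induce_union_of_isIndepSet {s t : Set α} {n : ℕ} (hs : (G.induce s).Colorable n)
    (ht : G.IsIndepSet t) : (G.induce (s ∪ t)).Colorable (n + 1) := by
  classical
  obtain ⟨c⟩ := hs
  let c' : (G.induce (s ∪ t)).Coloring (Option (Fin n)) :=
    Coloring.mk (fun x => if h : x.1 ∈ s then some (c ⟨x, h⟩) else none) <| by
      rintro ⟨x, hx⟩ ⟨y, hy⟩ hxy
      simp only [comap_adj, Function.Embedding.coe_subtype] at hxy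
      by_cases hxs : x ∈ s <;> by_cases hys : y ∈ s <;> simp only [hxs, hys, dite_true,
        dite_false, ne_eq, Option.some.injEq, reduceCtorEq, not_false_eq_true]
      · exact c.valid (v := ⟨x, hxs⟩) (w := ⟨y, hys⟩) hxy
      · exact fun _ => ht (hx.resolve_left hxs) (hy.resolve_left hys) (G.ne_of_adj hxy) hxy
  simpa using c'.colorable

lemma exists_isClique_colorable_induce_two_mul_le [DecidableEq α] (s : Finset α) :
    ∃ n, ∃ C ⊆ s, G.IsClique (C : Set α) ∧ (G.induce (s : Set α)).Colorable n ∧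
      2 * n ≤ #s + #C := by
  induction s using Finset.strongInduction with
  | _ s ih =>
  by_cases hs : G.IsClique (s : Set α)
  · exact ⟨#s, s, subset_rfl, hs, by simpa using (G.induce (s : Set α)).colorable_of_fintype,
      by omega⟩
  obtain ⟨u, hu, v, hv, huv, hnadj⟩ : ∃ u ∈ s, ∃ v ∈ s, u ≠ v ∧ ¬G.Adj u v := by
    simpa [isClique_iff, Set.Pairwise] using hs
  have huvs : {u, v} ⊆ s := insert_subset hu (singleton_subset_iff.2 hv)
  obtain ⟨n, C, hCs, hC, hcol, hcard⟩ := ih (s \ {u, v}) (sdiff_ssubset huvs (by simp))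
  refine ⟨n + 1, C, hCs.trans sdiff_subset, hC, ?_, ?_⟩
  · have hindep : G.IsIndepSet {u, v} := Set.pairwise_pair.2 fun _ =>
      ⟨hnadj, fun h => hnadj h.symm⟩
    have := hcol.induce_union_of_isIndepSet hindep
    rwa [coe_sdiff, coe_pair, Set.sdiff_union_self,
      Set.union_eq_left.2 (by rw [← coe_pair]; exact coe_subset.2 huvs)] at this
  · have := card_sdiff_add_card_eq_card huvs
    rw [card_pair huv] at this
    omega

end Pairing

theorem two_mul_chromaticNumber_toNat_le [Fintype α] (G : SimpleGraph α) :
    2 * G.chromaticNumber.toNat ≤ Fintype.card α + G.cliqueNum := by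
  classical
  obtain ⟨n, C, -, hC, hcol, hcard⟩ := G.exists_isClique_colorable_induce_two_mul_le univ
  rw [coe_univ] at hcol
  have hχ : G.chromaticNumber.toNat ≤ n := ENat.toNat_le_of_le_natCast
    (Colorable.of_hom G.induceUnivIso.symm.toHom hcol).chromaticNumber_le
  have := hC.card_le_cliqueNum
  rw [card_univ] at hcard
  omega

end SimpleGraph

theorem join_mem_Rt_general {α β : Type*} [Fintype α] [Fintype β] [Nonempty β]
    (G : SimpleGraph α) (H : SimpleGraph β) [DecidableRel H.Adj] (t : ℝ)
    (hH : (H.chromaticNumber.toNat : ℝ) ≤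
      (1 / 2) * ((H.cliqueNum : ℝ) + H.maxDegree + 1) + t) :
    ((G.join H).chromaticNumber.toNat : ℝ) ≤
      (1 / 2) * (((G.join H).cliqueNum : ℝ) + (G.join H).maxDegree + 1) + t := by
  have hχ : ((G.join H).chromaticNumber.toNat : ℝ) ≤
      G.chromaticNumber.toNat + H.chromaticNumber.toNat := by
    exact_mod_cast SimpleGraph.chromaticNumber_join_toNat_le G H
  have hχG : 2 * (G.chromaticNumber.toNat : ℝ) ≤ Fintype.card α + G.cliqueNum := by
    exact_mod_cast SimpleGraph.two_mul_chromaticNumber_toNat_le G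
  have hω : (G.cliqueNum : ℝ) + H.cliqueNum ≤ (G.join H).cliqueNum := by
    exact_mod_cast SimpleGraph.cliqueNum_add_cliqueNum_le_cliqueNum_join G H
  have hΔ : (Fintype.card α : ℝ) + H.maxDegree ≤ (G.join H).maxDegree := by
    exact_mod_cast SimpleGraph.card_add_maxDegree_le_maxDegree_join G H
  linarith

/-- If `H` satisfies Reed's bound with excess `t`, then so does `G + H` for any graph `G`. -/
theorem join_mem_Rt {α β : Type*} [Fintype α] [Fintype β] [Nonempty α] [Nonempty β]
    (G : SimpleGraph α) (H : SimpleGraph β) [DecidableRel H.Adj] (t : ℝ)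
    (hH : (H.chromaticNumber.toNat : ℝ) ≤
      (1 / 2) * ((H.cliqueNum : ℝ) + H.maxDegree + 1) + t) :
    ((G.join H).chromaticNumber.toNat : ℝ) ≤
      (1 / 2) * (((G.join H).cliqueNum : ℝ) + (G.join H).maxDegree + 1) + t :=
  join_mem_Rt_general G H t hH
end

section
/- If G is a finite simple graph with independence number α(G) ≤ 2, then χ(G) ≤ (1/2)(ω(G) + Δ(G) + 1) + 1/2. -/
set_option linter.unusedSectionVars false

namespace ReedAux

open Finset

variable {V : Type*} [Fintype V] [DecidableEq V] (G : SimpleGraph V)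

def Valid (Q : Finset (V × V)) : Prop :=
  (∀ p ∈ Q, Gᶜ.Adj p.1 p.2) ∧
  ∀ p ∈ Q, ∀ q ∈ Q, p ≠ q → p.1 ≠ q.1 ∧ p.1 ≠ q.2 ∧ p.2 ≠ q.1 ∧ p.2 ≠ q.2

def Mtd (Q : Finset (V × V)) (v : V) : Prop := ∃ p ∈ Q, v = p.1 ∨ v = p.2

def Links (a : V) : V → List (V × V) → Prop
  | x, [] => Gᶜ.Adj x a
  | x, p :: L => Gᶜ.Adj x p.1 ∧ Links a p.2 L

theorem exists_max_pairing : ∃ P : Finset (V × V), Valid G P ∧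
    ∀ Q : Finset (V × V), Valid G Q → Q.card ≤ P.card := by
  classical
  have hne : ((Finset.univ : Finset (Finset (V × V))).filter (fun Q => Valid G Q)).Nonempty := by
    refine ⟨∅, ?_⟩
    simp [Valid]
  obtain ⟨P, hP, hmax⟩ := (Finset.exists_max_image _ (fun Q => Q.card) hne)
  simp only [mem_filter, mem_univ, true_and] at hP hmax
  exact ⟨P, hP, fun Q hQ => hmax Q (by simp [hQ])⟩

variable {G}

lemma not_mtd_ne {Q : Finset (V × V)} {x : V} (hx : ¬ Mtd Q x) {p : V × V} (hp : p ∈ Q) :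
    x ≠ p.1 ∧ x ≠ p.2 := by
  constructor <;> (intro h; exact hx ⟨p, hp, by tauto⟩)

section Aug

variable {P : Finset (V × V)} (hP : Valid G P)
  (hmax : ∀ Q : Finset (V × V), Valid G Q → Q.card ≤ P.card)

include hmax in
theorem aug : ∀ (L : List (V × V)) (Q : Finset (V × V)) (x a : V), Valid G Q →
    Q.card = P.card → ¬ Mtd Q x → ¬ Mtd Q a → x ≠ a →
    (∀ p ∈ L, p ∈ Q ∨ p.swap ∈ Q) →
    (L.flatMap fun p => [p.1, p.2]).Nodup →
    Links G a x L → False := by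
  intro L
  induction L with
  | nil =>
    intro Q x a hQ hcard hx ha hxa _ _ hlink
    have hQ' : Valid G (insert (x, a) Q) := by
      obtain ⟨h1, h2⟩ := hQ
      constructor
      · intro p hp
        rcases Finset.mem_insert.mp hp with h | h
        · subst h; exact hlink
        · exact h1 p h
      · intro p hp q hq hpq
        rcases Finset.mem_insert.mp hp with h | h <;> rcases Finset.mem_insert.mp hq with h' | h'
        · exact absurd (h.trans h'.symm) hpq
        · subst h
          have h1' := not_mtd_ne hx h'
          have h2' := not_mtd_ne ha h'
          exact ⟨h1'.1, h1'.2, h2'.1, h2'.2⟩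
        · subst h'
          have h1' := not_mtd_ne hx h
          have h2' := not_mtd_ne ha h
          exact ⟨h1'.1.symm, h2'.1.symm, h1'.2.symm, h2'.2.symm⟩
        · exact h2 p h q h' hpq
    have hnotmem : (x, a) ∉ Q := fun h => hx ⟨(x, a), h, Or.inl rfl⟩
    have := hmax _ hQ'
    rw [Finset.card_insert_of_notMem hnotmem, hcard] at this
    omega
  | cons e L' ih =>
    intro Q x a hQ hcard hx ha hxa hmem hnd hlink
    obtain ⟨hadj1, hlink'⟩ := hlink
    have hnd2 : (e.1 :: e.2 :: L'.flatMap fun p => [p.1, p.2]).Nodup := by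
      simpa using hnd
    have hnd' : (L'.flatMap fun p => [p.1, p.2]).Nodup :=
      (List.nodup_cons.mp (List.nodup_cons.mp hnd2).2).2
    have hdisj : ∀ p ∈ L', p.1 ≠ e.1 ∧ p.1 ≠ e.2 ∧ p.2 ≠ e.1 ∧ p.2 ≠ e.2 := by
      intro p hp
      have h1 : e.1 ∉ (L'.flatMap fun p => [p.1, p.2]) := by
        have := (List.nodup_cons.mp hnd2).1
        simp only [List.mem_cons] at this
        tauto
      have h2 : e.2 ∉ (L'.flatMap fun p => [p.1, p.2]) :=
        (List.nodup_cons.mp (List.nodup_cons.mp hnd2).2).1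
      have hp1 : p.1 ∈ L'.flatMap fun p => [p.1, p.2] := by
        simp only [List.mem_flatMap]; exact ⟨p, hp, by simp⟩
      have hp2 : p.2 ∈ L'.flatMap fun p => [p.1, p.2] := by
        simp only [List.mem_flatMap]; exact ⟨p, hp, by simp⟩
      exact ⟨fun h => h1 (h ▸ hp1), fun h => h2 (h ▸ hp1),
             fun h => h1 (h ▸ hp2), fun h => h2 (h ▸ hp2)⟩
    suffices H : ∀ Q₁ : Finset (V × V), Valid G Q₁ → Q₁.card = P.card →
        (∀ v, Mtd Q₁ v ↔ Mtd Q v) → e ∈ Q₁ → (∀ p ∈ L', p ∈ Q₁ ∨ p.swap ∈ Q₁) → False by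
      rcases hmem e (by simp) with h | h
      · exact H Q hQ hcard (fun v => Iff.rfl) h (fun p hp => hmem p (by simp [hp]))
      · -- flip the pair e.swap to e
        have hadjswap := hQ.1 e.swap h
        simp only [Prod.fst_swap, Prod.snd_swap] at hadjswap
        have he12 : e.1 ≠ e.2 := hadjswap.ne.symm
        have heQ : e ∉ Q := by
          intro heq
          have hne : e ≠ e.swap := by
            intro hc
            have : e.1 = e.swap.1 := congrArg Prod.fst hc
            simp only [Prod.fst_swap] at this
            exact he12 this
          have := (hQ.2 e heq e.swap h hne).2.1
          simp only [Prod.snd_swap] at this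
          exact this rfl
        have hQ₁ : Valid G (insert e (Q.erase e.swap)) := by
          obtain ⟨h1, h2⟩ := hQ
          constructor
          · intro p hp
            rcases Finset.mem_insert.mp hp with hh | hh
            · subst hh; exact hadjswap.symm
            · exact h1 p (Finset.mem_of_mem_erase hh)
          · have key : ∀ q ∈ Q.erase e.swap,
                e.1 ≠ q.1 ∧ e.1 ≠ q.2 ∧ e.2 ≠ q.1 ∧ e.2 ≠ q.2 := by
              intro q hq
              have hqQ := Finset.mem_of_mem_erase hq
              have hqB := Finset.ne_of_mem_erase hq
              have := h2 e.swap h q hqQ (by intro hc; exact hqB (by rw [← hc]))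
              simp only [Prod.fst_swap, Prod.snd_swap] at this
              exact ⟨this.2.2.1, this.2.2.2, this.1, this.2.1⟩
            intro p hp q hq hpq
            rcases Finset.mem_insert.mp hp with hh | hh <;>
              rcases Finset.mem_insert.mp hq with hh' | hh'
            · exact absurd (hh.trans hh'.symm) hpq
            · subst hh; exact key q hh'
            · subst hh'
              have := key p hh
              exact ⟨this.1.symm, this.2.2.1.symm, this.2.1.symm, this.2.2.2.symm⟩
            · exact h2 p (Finset.mem_of_mem_erase hh) q (Finset.mem_of_mem_erase hh') hpq
        have hcard₁ : (insert e (Q.erase e.swap)).card = P.card := by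
          rw [Finset.card_insert_of_notMem
            (fun hc => heQ (Finset.mem_of_mem_erase hc)),
            Finset.card_erase_of_mem h, ← hcard]
          have : 1 ≤ Q.card := Finset.card_pos.mpr ⟨e.swap, h⟩
          omega
        have hMtd₁ : ∀ v, Mtd (insert e (Q.erase e.swap)) v ↔ Mtd Q v := by
          intro v
          constructor
          · rintro ⟨p, hp, hor⟩
            rcases Finset.mem_insert.mp hp with hh | hh
            · rw [hh] at hor
              refine ⟨Prod.swap e, h, ?_⟩
              simp only [Prod.fst_swap, Prod.snd_swap]
              tauto
            · exact ⟨p, Finset.mem_of_mem_erase hh, hor⟩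
          · rintro ⟨p, hp, hor⟩
            by_cases hpe : p = e.swap
            · subst hpe
              simp only [Prod.fst_swap, Prod.snd_swap] at hor
              exact ⟨e, Finset.mem_insert_self _ _, by tauto⟩
            · exact ⟨p, Finset.mem_insert_of_mem (Finset.mem_erase.mpr ⟨hpe, hp⟩), hor⟩
        refine H _ hQ₁ hcard₁ hMtd₁ (Finset.mem_insert_self _ _) ?_
        intro p hp
        have hd := hdisj p hp
        rcases hmem p (by simp [hp]) with hh | hh
        · left
          refine Finset.mem_insert_of_mem (Finset.mem_erase.mpr ⟨?_, hh⟩)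
          intro hc
          have : p.1 = e.swap.1 := by rw [hc]
          simp only [Prod.fst_swap] at this
          exact hd.2.1 this
        · right
          refine Finset.mem_insert_of_mem (Finset.mem_erase.mpr ⟨?_, hh⟩)
          intro hc
          have hpe : p = e := by
            have := congrArg Prod.swap hc
            simpa using this
          exact hd.1 (by rw [hpe])
    -- main step with e ∈ Q₁
    intro Q₁ hQ₁v hcard₁ hMtd₁ heQ₁ hmem₁
    have hx₁ : ¬ Mtd Q₁ x := fun hc => hx ((hMtd₁ x).mp hc)
    have ha₁ : ¬ Mtd Q₁ a := fun hc => ha ((hMtd₁ a).mp hc)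
    have he12 : e.1 ≠ e.2 := (hQ₁v.1 e heQ₁).ne
    have hxe := not_mtd_ne hx₁ heQ₁
    have hae := not_mtd_ne ha₁ heQ₁
    have key : ∀ q ∈ Q₁.erase e, x ≠ q.1 ∧ x ≠ q.2 ∧ e.1 ≠ q.1 ∧ e.1 ≠ q.2 ∧
        e.2 ≠ q.1 ∧ e.2 ≠ q.2 := by
      intro q hq
      have hqQ := Finset.mem_of_mem_erase hq
      have hqB := Finset.ne_of_mem_erase hq
      have hx' := not_mtd_ne hx₁ hqQ
      have hBq := hQ₁v.2 e heQ₁ q hqQ (Ne.symm hqB)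
      exact ⟨hx'.1, hx'.2, hBq.1, hBq.2.1, hBq.2.2.1, hBq.2.2.2⟩
    have hQ'valid : Valid G (insert (x, e.1) (Q₁.erase e)) := by
      constructor
      · intro p hp
        rcases Finset.mem_insert.mp hp with hh | hh
        · subst hh; exact hadj1
        · exact hQ₁v.1 p (Finset.mem_of_mem_erase hh)
      · intro p hp q hq hpq
        rcases Finset.mem_insert.mp hp with hh | hh <;>
          rcases Finset.mem_insert.mp hq with hh' | hh'
        · exact absurd (hh.trans hh'.symm) hpq
        · subst hh
          have := key q hh'
          exact ⟨this.1, this.2.1, this.2.2.1, this.2.2.2.1⟩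
        · subst hh'
          have := key p hh
          exact ⟨this.1.symm, this.2.2.1.symm, this.2.1.symm, this.2.2.2.1.symm⟩
        · exact hQ₁v.2 p (Finset.mem_of_mem_erase hh) q (Finset.mem_of_mem_erase hh') hpq
    have hcard' : (insert (x, e.1) (Q₁.erase e)).card = P.card := by
      rw [Finset.card_insert_of_notMem
        (fun hc => hx₁ ⟨(x, e.1), Finset.mem_of_mem_erase hc, Or.inl rfl⟩),
        Finset.card_erase_of_mem heQ₁, ← hcard₁]
      have : 1 ≤ Q₁.card := Finset.card_pos.mpr ⟨e, heQ₁⟩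
      omega
    have he2un : ¬ Mtd (insert (x, e.1) (Q₁.erase e)) e.2 := by
      rintro ⟨p, hp, hor⟩
      rcases Finset.mem_insert.mp hp with hh | hh
      · subst hh
        rcases hor with hh' | hh'
        · exact hxe.2 hh'.symm
        · exact he12 hh'.symm
      · have := key p hh
        tauto
    have haun : ¬ Mtd (insert (x, e.1) (Q₁.erase e)) a := by
      rintro ⟨p, hp, hor⟩
      rcases Finset.mem_insert.mp hp with hh | hh
      · subst hh
        rcases hor with hh' | hh'
        · exact hxa hh'.symm
        · exact hae.1 hh'
      · exact ha₁ ⟨p, Finset.mem_of_mem_erase hh, hor⟩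
    have he2a : e.2 ≠ a := fun hc => ha₁ ⟨e, heQ₁, Or.inr hc.symm⟩
    have hmem' : ∀ p ∈ L', p ∈ insert (x, e.1) (Q₁.erase e) ∨
        p.swap ∈ insert (x, e.1) (Q₁.erase e) := by
      intro p hp
      have hd := hdisj p hp
      rcases hmem₁ p hp with hh | hh
      · left
        refine Finset.mem_insert_of_mem (Finset.mem_erase.mpr ⟨?_, hh⟩)
        intro hc
        exact hd.1 (by rw [hc])
      · right
        refine Finset.mem_insert_of_mem (Finset.mem_erase.mpr ⟨?_, hh⟩)
        intro hc
        have : p.swap.1 = e.1 := by rw [hc]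
        simp only [Prod.fst_swap] at this
        exact hd.2.2.1 this
    exact ih _ e.2 a hQ'valid hcard' he2un haun he2a hmem' hnd' hlink'

end Aug

section Chains

variable {P : Finset (V × V)}

noncomputable def pr (P : Finset (V × V)) (v : V) : V := by
  classical
  exact if h : Mtd P v then (if v = h.choose.1 then h.choose.2 else h.choose.1) else v

lemma pr_spec {v : V} (hv : Mtd P v) : (v, pr P v) ∈ P ∨ (pr P v, v) ∈ P := by
  classical
  simp only [pr, dif_pos hv]
  obtain ⟨hp, hor⟩ := hv.choose_spec
  by_cases h : v = hv.choose.1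
  · rw [if_pos h]
    left
    have heq : (v, hv.choose.2) = hv.choose := Prod.ext_iff.mpr ⟨h, rfl⟩
    rw [heq]; exact hp
  · rw [if_neg h]
    right
    have hv2 : v = hv.choose.2 := by tauto
    have heq : (hv.choose.1, v) = hv.choose := Prod.ext_iff.mpr ⟨rfl, hv2⟩
    rw [heq]; exact hp

section WithValid

variable (hP : Valid G P)

include hP in
lemma pr_adj {v : V} (hv : Mtd P v) : Gᶜ.Adj v (pr P v) := by
  rcases pr_spec hv with h | h
  · exact hP.1 _ h
  · exact (hP.1 _ h).symm

lemma pr_mtd {v : V} (hv : Mtd P v) : Mtd P (pr P v) := by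
  rcases pr_spec hv with h | h
  · exact ⟨_, h, Or.inr rfl⟩
  · exact ⟨_, h, Or.inl rfl⟩

include hP in
lemma pair_unique {p q : V × V} (hp : p ∈ P) (hq : q ∈ P)
    (hshare : p.1 = q.1 ∨ p.1 = q.2 ∨ p.2 = q.1 ∨ p.2 = q.2) : p = q := by
  by_contra h
  have := hP.2 p hp q hq h
  tauto

include hP in
lemma pr_inj {v w : V} (hv : Mtd P v) (hw : Mtd P w) (h : pr P v = pr P w) : v = w := by
  have hadv := pr_adj hP hv
  have hadw := pr_adj hP hw
  rcases pr_spec hv with h1 | h1 <;> rcases pr_spec hw with h2 | h2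
  · have := pair_unique hP h1 h2 (by tauto)
    exact congrArg Prod.fst this
  · have heq := pair_unique hP h1 h2 (by simp only [h]; tauto)
    have c2 : pr P v = w := congrArg Prod.snd heq
    have hww : w = pr P w := by conv_lhs => rw [← c2, h]
    rw [← hww] at hadw
    exact (hadw.ne rfl).elim
  · have heq := pair_unique hP h1 h2 (by simp only [h]; tauto)
    have c2 : v = pr P w := congrArg Prod.snd heq
    have hvv : v = pr P v := by conv_lhs => rw [c2, ← h]
    rw [← hvv] at hadv
    exact (hadv.ne rfl).elim
  · have := pair_unique hP h1 h2 (by tauto)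
    exact congrArg Prod.snd this

end WithValid

section Main

variable (hP : Valid G P)
  (hmax : ∀ Q : Finset (V × V), Valid G Q → Q.card ≤ P.card)
  (hclq : Gᶜ.cliqueNum ≤ 2) {u : V} (hu : ¬ Mtd P u)

include hP hmax in
lemma no0 {x y : V} (hx : ¬ Mtd P x) (hy : ¬ Mtd P y) (hadj : Gᶜ.Adj x y) : False :=
  aug hmax [] P x y hP rfl hx hy hadj.ne (by simp) (by simp) hadj

include hP hmax hu in
lemma nbr_mtd {w : V} (hadj : Gᶜ.Adj u w) : Mtd P w := by
  by_contra h
  exact no0 hP hmax hu h hadj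

include hclq in
lemma tri {x y z : V} (hxy : Gᶜ.Adj x y) (hxz : Gᶜ.Adj x z) (hyz : Gᶜ.Adj y z) : False := by
  classical
  have hcard : ({x, y, z} : Finset V).card = 3 :=
    Finset.card_eq_three.mpr ⟨x, y, z, hxy.ne, hxz.ne, hyz.ne, rfl⟩
  have hcl : Gᶜ.IsClique ({x, y, z} : Finset V) := by
    intro c hc d hd hcd
    simp only [Finset.coe_insert, Set.mem_insert_iff, Finset.coe_singleton,
      Set.mem_singleton_iff] at hc hd
    have h1 := hxy.symm; have h2 := hxz.symm; have h3 := hyz.symm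
    rcases hc with rfl | rfl | rfl <;> rcases hd with rfl | rfl | rfl <;>
      first
        | exact absurd rfl hcd
        | assumption
  have h3 := SimpleGraph.IsClique.card_le_cliqueNum (G := Gᶜ) (tc := hcl)
  rw [hcard] at h3
  omega

include hP hmax hclq hu in
lemma pr_not_nbr {w : V} (hadj : Gᶜ.Adj u w) : ¬ Gᶜ.Adj u (pr P w) := fun hc =>
  tri hclq hadj hc (pr_adj hP (nbr_mtd hP hmax hu hadj))

end Main

/-- The link relation for alternating chains. -/
def Rl (G : SimpleGraph V) (P : Finset (V × V)) : V → V → Prop :=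
  fun w w' => Gᶜ.Adj w' (pr P w)

section Main2

variable (hP : Valid G P)

lemma asc_links : ∀ (C : List V) (hC : C ≠ []) (x a : V) (Rest : List (V × V)),
    List.Chain' (Rl G P) C → Gᶜ.Adj x (C.head hC) →
    Links G a (pr P (C.getLast hC)) Rest →
    Links G a x ((C.map fun w => (w, pr P w)) ++ Rest) := by
  intro C
  induction C with
  | nil => intro hC; exact absurd rfl hC
  | cons w t ih =>
    intro hC x a Rest hch hx hrest
    cases t with
    | nil =>
      simp only [List.map_cons, List.map_nil, List.cons_append, List.nil_append]
      exact ⟨hx, hrest⟩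
    | cons w2 t2 =>
      simp only [List.map_cons, List.cons_append]
      refine ⟨hx, ?_⟩
      have hch' : List.Chain' (Rl G P) (w2 :: t2) := (List.isChain_cons_cons.mp hch).2
      have hlink : Gᶜ.Adj (pr P w) w2 :=
        (show Gᶜ.Adj w2 (pr P w) from (List.isChain_cons_cons.mp hch).1).symm
      have := ih (by simp) (pr P w) a Rest hch' hlink ?_
      · simpa using this
      · simpa [List.getLast_cons] using hrest

lemma desc_links : ∀ (C : List V) (hC : C ≠ []) (x a : V),
    List.Chain' (Rl G P) C → Gᶜ.Adj x (pr P (C.getLast hC)) →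
    Gᶜ.Adj (C.head hC) a →
    Links G a x (C.reverse.map fun w => (pr P w, w)) := by
  intro C
  induction C using List.reverseRecOn with
  | nil => intro hC; exact absurd rfl hC
  | append_singleton l v ih =>
    intro hC x a hch hx hhead
    rw [List.getLast_append_of_ne_nil _ (by simp), List.getLast_singleton] at hx
    rw [List.reverse_append, List.reverse_singleton, List.singleton_append, List.map_cons]
    refine ⟨hx, ?_⟩
    rcases eq_or_ne l [] with hl | hlne
    · subst hl
      simpa [Links] using hhead
    · simp only [List.Chain', List.isChain_append] at hch
      have hlink : Rl G P (l.getLast hlne) v :=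
        hch.2.2 _ (by simp [List.getLast?_eq_getLast hlne]) v (by simp)
      have hhead' : Gᶜ.Adj (l.head hlne) a := by
        rwa [List.head_append_left hlne] at hhead
      exact ih hlne v a hch.1 (show Gᶜ.Adj v (pr P (l.getLast hlne)) from hlink) hhead'


variable (hmax : ∀ Q : Finset (V × V), Valid G Q → Q.card ≤ P.card)
  (hclq : Gᶜ.cliqueNum ≤ 2) {u : V} (hu : ¬ Mtd P u)

include hP hmax hclq hu in
lemma combine (Asc Desc : List V) (hA : Asc ≠ []) (hD : Desc ≠ []) {a : V}
    (ha : ¬ Mtd P a) (hau : a ≠ u)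
    (hAu : ∀ w ∈ Asc, Gᶜ.Adj u w) (hDu : ∀ w ∈ Desc, Gᶜ.Adj u w)
    (hAnd : Asc.Nodup) (hDnd : Desc.Nodup) (hdisj : ∀ w ∈ Asc, w ∉ Desc)
    (hAch : List.Chain' (Rl G P) Asc) (hDch : List.Chain' (Rl G P) Desc)
    (hhead : Gᶜ.Adj (Desc.head hD) a)
    (hjump : Gᶜ.Adj (pr P (Asc.getLast hA)) (pr P (Desc.getLast hD))) : False := by
  classical
  set L : List (V × V) :=
    (Asc.map fun w => (w, pr P w)) ++ (Desc.reverse.map fun w => (pr P w, w)) with hLdef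
  -- all listed vertices are matched
  have hAm : ∀ w ∈ Asc, Mtd P w := fun w hw => nbr_mtd hP hmax hu (hAu w hw)
  have hDm : ∀ w ∈ Desc, Mtd P w := fun w hw => nbr_mtd hP hmax hu (hDu w hw)
  -- membership condition
  have hmem : ∀ p ∈ L, p ∈ P ∨ p.swap ∈ P := by
    intro p hp
    rw [hLdef, List.mem_append] at hp
    rcases hp with hp | hp
    · rw [List.mem_map] at hp
      obtain ⟨w, hw, rfl⟩ := hp
      simpa using pr_spec (hAm w hw)
    · rw [List.mem_map] at hp
      obtain ⟨w, hw, rfl⟩ := hp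
      rw [List.mem_reverse] at hw
      simpa using (pr_spec (hDm w hw)).symm
  -- nodup of the vertex list
  have hblock : ∀ w w', Gᶜ.Adj u w → Gᶜ.Adj u w' → w ≠ w' →
      ∀ x, (x = w ∨ x = pr P w) → (x = w' ∨ x = pr P w') → False := by
    intro w w' hw hw' hne x hx hx'
    rcases hx with rfl | rfl <;> rcases hx' with h | h
    · exact hne h
    · exact pr_not_nbr hP hmax hclq hu hw' (h ▸ hw)
    · exact pr_not_nbr hP hmax hclq hu hw (h ▸ hw')
    · exact hne (pr_inj hP (nbr_mtd hP hmax hu hw) (nbr_mtd hP hmax hu hw') h)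
  have hnd : (L.flatMap fun p => [p.1, p.2]).Nodup := by
    rw [hLdef, List.flatMap_append]
    have e1 : ((Asc.map fun w => (w, pr P w)).flatMap fun p => [p.1, p.2]) =
        Asc.flatMap fun w => [w, pr P w] := by
      rw [List.flatMap_map]
    have e2 : ((Desc.reverse.map fun w => (pr P w, w)).flatMap fun p => [p.1, p.2]) =
        Desc.reverse.flatMap fun w => [pr P w, w] := by
      rw [List.flatMap_map]
    rw [e1, e2]
    have hnd1 : (Asc.flatMap fun w => [w, pr P w]).Nodup := by
      rw [List.nodup_flatMap]
      constructor
      · intro w hw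
        simp only [List.nodup_cons, List.mem_singleton, List.nodup_nil, and_true]
        exact ⟨fun h => (pr_adj hP (hAm w hw)).ne h, by simp⟩
      · refine hAnd.imp_of_mem ?_
        intro w w' hw hw' hne
        intro x hx hx'
        simp only [List.mem_cons, List.mem_singleton, List.not_mem_nil, or_false] at hx hx'
        exact hblock w w' (hAu w hw) (hAu w' hw') hne x hx hx'
    have hnd2 : (Desc.reverse.flatMap fun w => [pr P w, w]).Nodup := by
      rw [List.nodup_flatMap]
      constructor
      · intro w hw
        rw [List.mem_reverse] at hw
        simp only [List.nodup_cons, List.mem_singleton, List.nodup_nil, and_true]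
        exact ⟨fun h => (pr_adj hP (hDm w hw)).ne h.symm, by simp⟩
      · refine ((List.nodup_reverse.mpr hDnd)).imp_of_mem ?_
        intro w w' hw hw' hne
        rw [List.mem_reverse] at hw hw'
        intro x hx hx'
        simp only [List.mem_cons, List.mem_singleton, List.not_mem_nil, or_false] at hx hx'
        exact hblock w w' (hDu w hw) (hDu w' hw') hne x (by tauto) (by tauto)
    rw [List.nodup_append]
    refine ⟨hnd1, hnd2, ?_⟩
    intro x hx _ hx' rfl
    rw [List.mem_flatMap] at hx hx'
    obtain ⟨w, hw, hxw⟩ := hx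
    obtain ⟨w', hw', hxw'⟩ := hx'
    rw [List.mem_reverse] at hw'
    simp only [List.mem_cons, List.mem_singleton, List.not_mem_nil, or_false] at hxw hxw'
    exact hblock w w' (hAu w hw) (hDu w' hw') (fun h => hdisj w hw (h ▸ hw')) x hxw
      (by tauto)
  -- the links
  have hlinks : Links G a u L := by
    rw [hLdef]
    refine asc_links (G := G) (P := P) Asc hA u a _ hAch (hAu _ (List.head_mem hA)) ?_
    exact desc_links Desc hD (pr P (Asc.getLast hA)) a hDch hjump hhead
  exact aug hmax L P u a hP rfl hu ha (Ne.symm hau) hmem hnd hlinks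

lemma split_chain : ∀ (C : List V) (hC : C ≠ []) (B : List V),
    C.getLast hC ∉ B → C.Nodup → List.Chain' (Rl G P) C → (∀ w ∈ C, Gᶜ.Adj u w) →
    ∃ (T : List V) (hT : T ≠ []), T.Nodup ∧ List.Chain' (Rl G P) T ∧
      (∀ w ∈ T, Gᶜ.Adj u w) ∧ (∀ w ∈ T, w ∉ B) ∧ T.getLast hT = C.getLast hC := by
  intro C
  induction C with
  | nil => intro hC; exact absurd rfl hC
  | cons w t ih =>
    intro hC B hlast hnd hch hadj
    by_cases hall : ∀ x ∈ w :: t, x ∉ B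
    · exact ⟨w :: t, hC, hnd, hch, hadj, hall, rfl⟩
    · have htne : t ≠ [] := by
        rintro rfl
        simp only [List.getLast_singleton] at hlast
        push_neg at hall
        obtain ⟨x, hx, hxB⟩ := hall
        simp only [List.mem_singleton] at hx
        exact hlast (hx ▸ hxB)
      have hlast' : t.getLast htne ∉ B := by
        rwa [List.getLast_cons htne] at hlast
      obtain ⟨T, hT, h1, h2, h3, h4, h5⟩ := ih htne B hlast' hnd.of_cons hch.tail
        (fun x hx => hadj x (List.mem_cons_of_mem _ hx))
      exact ⟨T, hT, h1, h2, h3, h4, by rw [h5, List.getLast_cons htne]⟩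

/-- a matched vertex is chain-reachable. -/
def ChainTo (G : SimpleGraph V) (P : Finset (V × V)) (u v : V) : Prop :=
  ∃ (C : List V) (hC : C ≠ []), C.Nodup ∧ List.Chain' (Rl G P) C ∧
    (∀ w ∈ C, Gᶜ.Adj u w) ∧
    (∃ a, ¬ Mtd P a ∧ a ≠ u ∧ Gᶜ.Adj (C.head hC) a) ∧ C.getLast hC = v

lemma chain_base {v a : V} (hv : Gᶜ.Adj u v) (ha : ¬ Mtd P a) (hau : a ≠ u)
    (hadj : Gᶜ.Adj v a) : ChainTo G P u v :=
  ⟨[v], by simp, by simp, List.isChain_singleton _, by simpa using hv, ⟨a, ha, hau, by simpa using hadj⟩, rfl⟩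

lemma chain_step {v w : V} (hv : Gᶜ.Adj u v) (hw : ChainTo G P u w)
    (hadj : Gᶜ.Adj v (pr P w)) : ChainTo G P u v := by
  classical
  obtain ⟨C, hC, hnd, hch, hadjs, ⟨a, ha, hau, hhead⟩, hlast⟩ := hw
  by_cases hvC : v ∈ C
  · obtain ⟨s, t, rfl⟩ := List.append_of_mem hvC
    refine ⟨s ++ [v], by simp, ?_, ?_, ?_, ⟨a, ha, hau, ?_⟩, List.getLast_append _⟩
    · have hsub : (s ++ [v]).Sublist (s ++ v :: t) :=
        List.Sublist.append_left (List.cons_sublist_cons.mpr (List.nil_sublist t)) s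
      exact List.Nodup.sublist hsub hnd
    · exact hch.prefix ⟨t, by simp⟩
    · intro x hx
      refine hadjs x ?_
      rcases List.mem_append.mp hx with h | h
      · exact List.mem_append.mpr (Or.inl h)
      · simp only [List.mem_singleton] at h
        subst h
        simp
    · rcases eq_or_ne s [] with rfl | hs
      · simpa using hhead
      · rw [List.head_append_left hs] at hhead
        rwa [List.head_append_left hs]
  · refine ⟨C ++ [v], by simp, ?_, ?_, ?_, ⟨a, ha, hau, ?_⟩, List.getLast_append _⟩
    · rw [List.nodup_append]
      exact ⟨hnd, by simp, by simpa using fun a ha (h : a = v) => hvC (h ▸ ha)⟩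
    · simp only [List.Chain', List.isChain_append]
      refine ⟨hch, by simp, ?_⟩
      intro x hx y hy
      simp only [List.head?_cons, Option.mem_some_iff] at hy
      rw [List.getLast?_eq_getLast hC] at hx
      simp only [Option.mem_some_iff] at hx
      subst hy
      rw [← hx, hlast]
      exact hadj
    · intro x hx
      rcases List.mem_append.mp hx with h | h
      · exact hadjs x h
      · simp only [List.mem_singleton] at h
        subst h
        exact hv
    · rwa [List.head_append_left hC]

include hP hmax hclq hu in
lemma goal_mem (C : List V) (hC : C ≠ []) (hnd : C.Nodup)
    (hch : List.Chain' (Rl G P) C) (hadjs : ∀ w ∈ C, Gᶜ.Adj u w)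
    {a : V} (ha : ¬ Mtd P a) (hau : a ≠ u) (hhead : Gᶜ.Adj (C.head hC) a)
    {x : V} (hxC : x ∈ C) (hxne : x ≠ C.getLast hC)
    (hadjx : Gᶜ.Adj (pr P x) (pr P (C.getLast hC))) : False := by
  classical
  obtain ⟨s, t, hCeq0⟩ := List.append_of_mem hxC
  have hCeq : C = (s ++ [x]) ++ t := by rw [hCeq0]; simp
  have htne : t ≠ [] := by
    rintro rfl
    have h1 : C.getLast? = some x := by rw [hCeq]; simp
    rw [List.getLast?_eq_getLast hC, Option.some_inj] at h1
    exact hxne h1.symm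
  have hC' : (s ++ [x]) ++ t ≠ [] := by simp
  have hDne : s ++ [x] ≠ [] := by simp
  have hlast : C.getLast hC = t.getLast htne := by
    have h1 : C.getLast? = ((s ++ [x]) ++ t).getLast? := by rw [hCeq]
    rw [List.getLast?_eq_getLast hC, List.getLast?_eq_getLast hC',
      Option.some_inj] at h1
    rw [h1, List.getLast_append_of_ne_nil _ htne]
  have hheadeq : C.head hC = (s ++ [x]).head hDne := by
    have h1 : C.head? = ((s ++ [x]) ++ t).head? := by rw [hCeq]
    rw [List.head?_eq_head hC, List.head?_eq_head hC', Option.some_inj] at h1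
    rw [h1, List.head_append_left hDne]
  rw [hlast] at hxne hadjx
  rw [hheadeq] at hhead
  rw [hCeq] at hnd hch hadjs
  rw [List.nodup_append] at hnd
  obtain ⟨hnd1, hnd2, hnddisj⟩ := hnd
  refine combine hP hmax hclq hu t (s ++ [x]) htne hDne ha hau
    (fun w hw => hadjs w (List.mem_append.mpr (Or.inr hw)))
    (fun w hw => hadjs w (List.mem_append.mpr (Or.inl hw)))
    hnd2 hnd1 ?_ (hch.suffix ⟨s ++ [x], rfl⟩) (hch.prefix ⟨t, rfl⟩) ?_ ?_
  · intro w hw hwD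
    exact hnddisj w hwD w hw rfl
  · exact hhead
  · rw [List.getLast_append_of_ne_nil _ (by simp), List.getLast_singleton]
    exact hadjx.symm

include hP hmax hclq hu in
lemma goal {v1 v2 : V} (h1 : ChainTo G P u v1) (h2 : ChainTo G P u v2)
    (hadj : Gᶜ.Adj (pr P v1) (pr P v2)) : False := by
  classical
  have hne : v1 ≠ v2 := fun h => hadj.ne (by rw [h])
  obtain ⟨C1, hC1, hnd1, hch1, hadjs1, ⟨a1, ha1, hau1, hhead1⟩, hlast1⟩ := h1
  obtain ⟨C2, hC2, hnd2, hch2, hadjs2, ⟨a2, ha2, hau2, hhead2⟩, hlast2⟩ := h2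
  by_cases hm1 : v1 ∈ C2
  · exact goal_mem hP hmax hclq hu C2 hC2 hnd2 hch2 hadjs2 ha2 hau2 hhead2 hm1
      (hlast2 ▸ hne) (hlast2 ▸ hadj)
  by_cases hm2 : v2 ∈ C1
  · exact goal_mem hP hmax hclq hu C1 hC1 hnd1 hch1 hadjs1 ha1 hau1 hhead1 hm2
      (hlast1 ▸ hne.symm) (hlast1 ▸ hadj.symm)
  · have hv1notC2 : C1.getLast hC1 ∉ C2 := by rw [hlast1]; exact hm1
    obtain ⟨T, hT, hTnd, hTch, hTadj, hTdisj, hTlast⟩ :=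
      split_chain (G := G) (P := P) (u := u) C1 hC1 C2 hv1notC2 hnd1 hch1 hadjs1
    refine combine hP hmax hclq hu T C2 hT hC2 ha2 hau2 hTadj hadjs2 hTnd hnd2 hTdisj
      hTch hch2 hhead2 ?_
    rw [hTlast, hlast1, hlast2]
    exact hadj

include hP hmax hu in
lemma o3 {w a : V} (hw : Gᶜ.Adj u w) (ha : ¬ Mtd P a) (hau : a ≠ u)
    (hadj : Gᶜ.Adj (pr P w) a) : False := by
  refine aug hmax [(w, pr P w)] P u a hP rfl hu ha (Ne.symm hau) ?_ ?_ ⟨hw, hadj⟩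
  · intro p hp
    simp only [List.mem_singleton] at hp
    subst hp
    simpa using pr_spec (nbr_mtd hP hmax hu hw)
  · simpa using fun h => (pr_adj hP (nbr_mtd hP hmax hu hw)).ne h

include hP hmax hclq hu in
lemma big_clique (A Nu : Finset V) (hA : ∀ a, a ∈ A ↔ (¬ Mtd P a ∧ a ≠ u))
    (hNu : ∀ w, w ∈ Nu ↔ Gᶜ.Adj u w) :
    ∃ K : Finset V, G.IsClique (K : Set V) ∧ K.card = A.card + Nu.card := by
  classical
  set Ffin : Finset V := Nu.filter (fun v => ChainTo G P u v) with hFdef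
  set K : Finset V := A ∪ ((Nu \ Ffin) ∪ Ffin.image (pr P)) with hKdef
  have hcase : ∀ x ∈ K, x ∈ A ∨ (Gᶜ.Adj u x ∧ ¬ ChainTo G P u x) ∨
      (∃ w, Gᶜ.Adj u w ∧ ChainTo G P u w ∧ x = pr P w) := by
    intro x hx
    rw [hKdef] at hx
    simp only [Finset.mem_union, Finset.mem_sdiff, Finset.mem_filter, Finset.mem_image,
      hFdef] at hx
    rcases hx with h | ⟨⟨h1, h2⟩⟩ | ⟨w, ⟨hw1, hw2⟩, hw3⟩
    · exact Or.inl h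
    · exact Or.inr (Or.inl ⟨(hNu x).mp h1, fun hc => h2 ⟨h1, hc⟩⟩)
    · exact Or.inr (Or.inr ⟨w, (hNu w).mp hw1, hw2, hw3.symm⟩)
  refine ⟨K, ?_, ?_⟩
  · intro x hx y hy hne
    by_contra hnadj
    have hadj : Gᶜ.Adj x y := by
      rw [SimpleGraph.compl_adj]
      exact ⟨hne, hnadj⟩
    rcases hcase x hx with hx1 | ⟨hx1, hx2⟩ | ⟨w, hw1, hw2, rfl⟩ <;>
      rcases hcase y hy with hy1 | ⟨hy1, hy2⟩ | ⟨w', hw'1, hw'2, hyp⟩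
    · exact no0 hP hmax ((hA x).mp hx1).1 ((hA y).mp hy1).1 hadj
    · exact hy2 (chain_base hy1 ((hA x).mp hx1).1 ((hA x).mp hx1).2 hadj.symm)
    · subst hyp
      exact o3 hP hmax hu hw'1 ((hA x).mp hx1).1 ((hA x).mp hx1).2 hadj.symm
    · exact hx2 (chain_base hx1 ((hA y).mp hy1).1 ((hA y).mp hy1).2 hadj)
    · exact tri hclq hx1 hy1 hadj
    · subst hyp
      exact hx2 (chain_step hx1 hw'2 hadj)
    · exact o3 hP hmax hu hw1 ((hA y).mp hy1).1 ((hA y).mp hy1).2 hadj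
    · exact hy2 (chain_step hy1 hw2 hadj.symm)
    · subst hyp
      exact goal hP hmax hclq hu hw2 hw'2 hadj
  · have hd1 : Disjoint (Nu \ Ffin) (Ffin.image (pr P)) := by
      rw [Finset.disjoint_left]
      rintro x hx hx'
      simp only [Finset.mem_image, hFdef, Finset.mem_filter] at hx'
      obtain ⟨w, ⟨hw1, _⟩, rfl⟩ := hx'
      rw [Finset.mem_sdiff] at hx
      exact pr_not_nbr hP hmax hclq hu ((hNu w).mp hw1) ((hNu _).mp hx.1)
    have hd2 : Disjoint A ((Nu \ Ffin) ∪ Ffin.image (pr P)) := by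
      rw [Finset.disjoint_left]
      rintro x hx hx'
      have hxm := (hA x).mp hx
      rcases Finset.mem_union.mp hx' with h | h
      · rw [Finset.mem_sdiff] at h
        exact no0 hP hmax hu hxm.1 ((hNu x).mp h.1)
      · simp only [Finset.mem_image, hFdef, Finset.mem_filter] at h
        obtain ⟨w, ⟨hw1, _⟩, rfl⟩ := h
        exact hxm.1 (pr_mtd (nbr_mtd hP hmax hu ((hNu w).mp hw1)))
    rw [hKdef, Finset.card_union_of_disjoint hd2, Finset.card_union_of_disjoint hd1]
    have himg : (Ffin.image (pr P)).card = Ffin.card := by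
      apply Finset.card_image_of_injOn
      intro w hw w' hw' heq
      simp only [hFdef, Finset.mem_coe, Finset.mem_filter] at hw hw'
      exact pr_inj hP (nbr_mtd hP hmax hu ((hNu w).mp hw.1))
        (nbr_mtd hP hmax hu ((hNu w').mp hw'.1)) heq
    have hsub : Ffin ⊆ Nu := Finset.filter_subset _ _
    rw [himg]
    have := Finset.card_sdiff_add_card_eq_card hsub
    omega

end Main2

section Coloring

variable (hP : Valid G P)

noncomputable def rep (P : Finset (V × V)) (v : V) : V := by
  classical
  exact if h : Mtd P v then h.choose.1 else v

lemma rep_spec {v : V} (hv : Mtd P v) :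
    ∃ p ∈ P, rep P v = p.1 ∧ (v = p.1 ∨ v = p.2) := by
  classical
  obtain ⟨hp, hor⟩ := hv.choose_spec
  exact ⟨hv.choose, hp, by simp only [rep, dif_pos hv], hor⟩

lemma rep_unmtd {v : V} (hv : ¬ Mtd P v) : rep P v = v := by
  classical
  simp only [rep, dif_neg hv]

include hP in
lemma rep_good {v w : V} (hadj : G.Adj v w) : rep P v ≠ rep P w := by
  intro heq
  by_cases hv : Mtd P v <;> by_cases hw : Mtd P w
  · obtain ⟨p, hp, hp1, hp2⟩ := rep_spec hv
    obtain ⟨q, hq, hq1, hq2⟩ := rep_spec hw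
    have hpq : p = q := pair_unique hP hp hq (Or.inl (by rw [← hp1, ← hq1, heq]))
    subst hpq
    have hvw : v ≠ w := hadj.ne
    have hGc : Gᶜ.Adj p.1 p.2 := hP.1 p hp
    have : ¬ G.Adj p.1 p.2 := hGc.2
    rcases hp2 with rfl | rfl <;> rcases hq2 with rfl | rfl
    · exact hvw rfl
    · exact this hadj
    · exact this hadj.symm
    · exact hvw rfl
  · obtain ⟨p, hp, hp1, hp2⟩ := rep_spec hv
    rw [rep_unmtd hw] at heq
    exact hw ⟨p, hp, Or.inl (by rw [← heq, hp1])⟩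
  · obtain ⟨p, hp, hp1, hp2⟩ := rep_spec hw
    rw [rep_unmtd hv] at heq
    exact hv ⟨p, hp, Or.inl (by rw [heq, hp1])⟩
  · rw [rep_unmtd hv, rep_unmtd hw] at heq
    exact hadj.ne heq

include hP in
lemma chrom_bound (U : Finset V) (hU : ∀ a, a ∈ U ↔ ¬ Mtd P a) :
    G.chromaticNumber.toNat ≤ U.card + P.card := by
  classical
  set S : Finset V := U ∪ P.image Prod.fst with hSdef
  have hmem : ∀ v, rep P v ∈ S := by
    intro v
    by_cases hv : Mtd P v
    · obtain ⟨p, hp, hp1, _⟩ := rep_spec hv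
      rw [hSdef, Finset.mem_union, hp1]
      exact Or.inr (Finset.mem_image_of_mem _ hp)
    · rw [rep_unmtd hv, hSdef, Finset.mem_union]
      exact Or.inl ((hU v).mpr hv)
  have C : G.Coloring {y // y ∈ S} :=
    SimpleGraph.Coloring.mk (fun v => ⟨rep P v, hmem v⟩)
      (fun {a b} hadj heq => rep_good hP hadj (by simpa using congrArg Subtype.val heq))
  have hcol : G.Colorable (Fintype.card {y // y ∈ S}) := C.colorable
  rw [Fintype.card_coe] at hcol
  have hle : G.chromaticNumber ≤ (S.card : ℕ∞) := hcol.chromaticNumber_le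
  have h2 : S.card ≤ U.card + P.card := by
    calc S.card ≤ U.card + (P.image Prod.fst).card := Finset.card_union_le _ _
    _ ≤ U.card + P.card := by
        have := Finset.card_image_le (s := P) (f := Prod.fst)
        omega
  exact le_trans (ENat.toNat_le_of_le_coe hle) h2

end Coloring
end Chains
end ReedAux

/-- If `α(G) ≤ 2`, then `χ(G) ≤ (1/2)(ω(G) + Δ(G) + 1) + 1/2`. -/
theorem reed_half_of_indepNum_le_two {V : Type*} [Fintype V] [Nonempty V]
    (G : SimpleGraph V) [DecidableRel G.Adj] (h : Gᶜ.cliqueNum ≤ 2) :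
    (G.chromaticNumber.toNat : ℝ) ≤
      (1 / 2) * ((G.cliqueNum : ℝ) + G.maxDegree + 1) + 1 / 2 := by
  classical
  obtain ⟨P, hP, hmax⟩ := ReedAux.exists_max_pairing G
  set n := Fintype.card V with hndef
  set Uf : Finset V := Finset.univ.filter (fun a => ¬ ReedAux.Mtd P a) with hUfdef
  set k := Uf.card with hkdef
  -- counting matched vertices
  have hmatched : (Finset.univ.filter (fun a => ReedAux.Mtd P a)).card = 2 * P.card := by
    have hEq : Finset.univ.filter (fun a => ReedAux.Mtd P a) =
        P.biUnion (fun p => {p.1, p.2}) := by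
      ext v
      simp only [Finset.mem_filter, Finset.mem_univ, true_and, Finset.mem_biUnion,
        Finset.mem_insert, Finset.mem_singleton, ReedAux.Mtd]
      simp
    have hdis : ∀ p ∈ P, ∀ q ∈ P, p ≠ q →
        Disjoint ({p.1, p.2} : Finset V) {q.1, q.2} := by
      intro p hp q hq hpq
      rw [Finset.disjoint_left]
      intro x hx hx'
      simp only [Finset.mem_insert, Finset.mem_singleton] at hx hx'
      have hd := hP.2 p hp q hq hpq
      rcases hx with rfl | rfl <;> rcases hx' with h' | h' <;>
        first
          | exact hd.1 h' | exact hd.2.1 h' | exact hd.2.2.1 h' | exact hd.2.2.2 h'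
    rw [hEq, Finset.card_biUnion hdis]
    have h2 : ∀ p ∈ P, ({p.1, p.2} : Finset V).card = 2 := fun p hp => by
      rw [Finset.card_insert_of_notMem (by simp [(hP.1 p hp).ne]), Finset.card_singleton]
    rw [Finset.sum_congr rfl h2, Finset.sum_const, smul_eq_mul, mul_comm]
  have hnk : 2 * P.card + k = n := by
    rw [hkdef, hUfdef, ← hmatched]
    exact Finset.card_filter_add_card_filter_not _
  have hchrom : G.chromaticNumber.toNat ≤ k + P.card :=
    ReedAux.chrom_bound hP Uf (fun a => by simp [hUfdef])
  have hc1 : 2 * G.chromaticNumber.toNat ≤ n + k := by omega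
  -- easy clique bound around any vertex
  have hclq2 : ∀ v : V, n ≤ G.cliqueNum + (G.degree v + 1) := by
    intro v
    set K0 : Finset V := Finset.univ \ insert v (G.neighborFinset v) with hK0def
    have hK0mem : ∀ x, x ∈ K0 ↔ (x ≠ v ∧ ¬ G.Adj v x) := by
      intro x
      simp [hK0def]
    have hK0cl : G.IsClique (K0 : Set V) := by
      intro x hx y hy hne
      rw [Finset.mem_coe, hK0mem] at hx hy
      by_contra hnadj
      refine ReedAux.tri (G := G) h (x := v) (y := x) (z := y) ?_ ?_ ?_
      · exact (SimpleGraph.compl_adj _ _ _).mpr ⟨Ne.symm hx.1, hx.2⟩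
      · exact (SimpleGraph.compl_adj _ _ _).mpr ⟨Ne.symm hy.1, hy.2⟩
      · exact (SimpleGraph.compl_adj _ _ _).mpr ⟨hne, hnadj⟩
    have hcardK0 : K0.card + (G.degree v + 1) = n := by
      rw [hK0def, Finset.card_sdiff_of_subset (Finset.subset_univ _)]
      have hins : (insert v (G.neighborFinset v)).card = G.degree v + 1 := by
        rw [Finset.card_insert_of_notMem (by simp), SimpleGraph.card_neighborFinset_eq_degree]
      rw [hins]
      have hle : G.degree v + 1 ≤ n := by
        rw [← hins]
        exact Finset.card_le_card (Finset.subset_univ _)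
      have hn : (Finset.univ : Finset V).card = n := rfl
      omega
    have hK0le : K0.card ≤ G.cliqueNum :=
      SimpleGraph.IsClique.card_le_cliqueNum (tc := hK0cl)
    calc n = K0.card + (G.degree v + 1) := hcardK0.symm
      _ ≤ G.cliqueNum + (G.degree v + 1) := Nat.add_le_add_right hK0le _
  have hfinal : 2 * G.chromaticNumber.toNat ≤ G.cliqueNum + G.maxDegree + 2 := by
    rcases Nat.eq_zero_or_pos k with hk0 | hkpos
    · have v := Classical.arbitrary V
      have h1 := hclq2 v
      have h2 := G.degree_le_maxDegree v
      omega
    · obtain ⟨u, hu⟩ := Finset.card_pos.mp hkpos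
      have huU : ¬ ReedAux.Mtd P u := by
        rw [hUfdef] at hu
        simpa using hu
      set A : Finset V := Uf.erase u with hAdef
      set Nu : Finset V := Finset.univ.filter (fun w => Gᶜ.Adj u w) with hNudef
      obtain ⟨K, hKcl, hKcard⟩ := ReedAux.big_clique hP hmax h huU A Nu
        (fun a => by simp [hAdef, hUfdef, and_comm]) (fun w => by simp [hNudef])
      have hKle : K.card ≤ G.cliqueNum :=
        SimpleGraph.IsClique.card_le_cliqueNum (tc := hKcl)
      have hAcard : A.card = k - 1 := by
        rw [hAdef, Finset.card_erase_of_mem hu]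
      have hNucard : Nu.card + (G.degree u + 1) = n := by
        have hEq : Nu = Finset.univ \ insert u (G.neighborFinset u) := by
          ext w
          simp only [hNudef, Finset.mem_filter, Finset.mem_univ, true_and,
            Finset.mem_sdiff, Finset.mem_insert, SimpleGraph.mem_neighborFinset,
            SimpleGraph.compl_adj, not_or, ne_eq, eq_comm]
          try tauto
        rw [hEq, Finset.card_sdiff_of_subset (Finset.subset_univ _)]
        have hins : (insert u (G.neighborFinset u)).card = G.degree u + 1 := by
          rw [Finset.card_insert_of_notMem (by simp), SimpleGraph.card_neighborFinset_eq_degree]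
        rw [hins]
        have hle : G.degree u + 1 ≤ n := by
          rw [← hins]
          exact Finset.card_le_card (Finset.subset_univ _)
        have hn : (Finset.univ : Finset V).card = n := rfl
        omega
      have hdeg := G.degree_le_maxDegree u
      omega
  have hcast : (2 : ℝ) * G.chromaticNumber.toNat ≤ G.cliqueNum + G.maxDegree + 2 := by
    exact_mod_cast hfinal
  linarith
end

section
/- If G is a finite simple graph with α(G) ≤ 2, then ω(G)² + ω(G) ≥ |G|. -/
open Finset

/-- If `α(G) ≤ 2`, then `ω(G)² + ω(G) ≥ |G|`. -/
theorem card_le_cliqueNum_sq_add_cliqueNum {V : Type*} [Fintype V] [Nonempty V]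
    (G : SimpleGraph V) (h : Gᶜ.cliqueNum ≤ 2) :
    Fintype.card V ≤ G.cliqueNum ^ 2 + G.cliqueNum := by
  classical
  set ω := G.cliqueNum with hω
  obtain ⟨s, hs⟩ := G.exists_isNClique_cliqueNum
  -- non-neighborhoods are cliques
  set N : V → Finset V := fun u => univ.filter (fun v => v ≠ u ∧ ¬ G.Adj u v) with hN
  have hNclique : ∀ u, G.IsClique (N u) := by
    intro u v hv w hw hvw
    simp only [hN, coe_filter, Set.mem_setOf_eq, mem_univ, true_and] at hv hw
    by_contra hadj
    have h3 : (Gᶜ).IsClique ({u, v, w} : Finset V) := by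
      intro a ha b hb hab
      simp only [coe_insert, Set.mem_insert_iff, coe_singleton, Set.mem_singleton_iff] at ha hb
      have hvw' : ¬ G.Adj v w := hadj
      have huv : ¬ G.Adj u v := hv.2
      have huw : ¬ G.Adj u w := hw.2
      rcases ha with rfl | rfl | rfl <;> rcases hb with rfl | rfl | rfl <;>
        first
          | exact absurd rfl hab
          | simp [SimpleGraph.compl_adj, hab] <;>
              first
                | exact huv
                | exact huw
                | exact hvw'
                | exact fun hc => huv (G.adj_symm hc)
                | exact fun hc => huw (G.adj_symm hc)
                | exact fun hc => hvw' (G.adj_symm hc)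
    have hcard : ({u, v, w} : Finset V).card = 3 := by
      rw [card_insert_of_notMem, card_insert_of_notMem, card_singleton]
      · simp [hvw]
      · simp only [mem_insert, mem_singleton]
        push_neg
        exact ⟨Ne.symm hv.1, Ne.symm hw.1⟩
    have := SimpleGraph.IsClique.card_le_cliqueNum (G := Gᶜ) (tc := h3)
    omega
  have hNcard : ∀ u, (N u).card ≤ ω := fun u =>
    SimpleGraph.IsClique.card_le_cliqueNum (tc := hNclique u)
  -- every vertex outside s is in some N u, u ∈ s
  have hcover : (univ : Finset V) ⊆ s ∪ s.biUnion N := by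
    intro v _
    by_cases hv : v ∈ s
    · exact mem_union_left _ hv
    · refine mem_union_right _ ?_
      rw [mem_biUnion]
      by_contra hcon
      push_neg at hcon
      have hins : G.IsClique (insert v (s : Set V)) := by
        refine hs.isClique.insert ?_
        intro b hb hbv
        have := hcon b hb
        simp only [hN, mem_filter, mem_univ, true_and] at this
        push_neg at this
        have hvb : v ≠ b := fun e => hv (e ▸ hb)
        exact (this hvb).symm
      have : (insert v s).card ≤ ω := by
        have := SimpleGraph.IsClique.card_le_cliqueNum (G := G)
          (t := insert v s) (tc := by simpa using hins)
        exact this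
      rw [card_insert_of_notMem hv, hs.card_eq] at this
      omega
  calc Fintype.card V = (univ : Finset V).card := rfl
    _ ≤ (s ∪ s.biUnion N).card := card_le_card hcover
    _ ≤ s.card + (s.biUnion N).card := card_union_le _ _
    _ ≤ s.card + ∑ u ∈ s, (N u).card := by
        exact Nat.add_le_add_left (card_biUnion_le) _
    _ ≤ ω + ∑ u ∈ s, ω := by
        refine Nat.add_le_add (le_of_eq hs.card_eq) (Finset.sum_le_sum fun u _ => hNcard u)
    _ = ω + ω * ω := by rw [Finset.sum_const, hs.card_eq, smul_eq_mul]
    _ = ω ^ 2 + ω := by ring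
end

section
/- For any finite simple graph G with at least one vertex, χ(G) ≤ (1/2)(ω(G) + (|G| + Δ(G) + 1)/2). -/
open Finset

namespace ChromBound

universe u
variable {V : Type u}

lemma toNat_chromaticNumber_le {G : SimpleGraph V} {m : ℕ} (h : G.Colorable m) :
    G.chromaticNumber.toNat ≤ m := by
  have h2 := h.chromaticNumber_le
  have h3 : G.chromaticNumber ≠ ⊤ := by
    intro ht
    rw [ht] at h2
    exact (ENat.coe_lt_top m).ne (top_le_iff.mp h2)
  have := ENat.toNat_le_toNat h2 (by simp)
  simpa using this

lemma colorable_of_induce_compl [Fintype V] (G : SimpleGraph V) (I : Set V)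
    (hI : ∀ a ∈ I, ∀ b ∈ I, ¬ G.Adj a b) {k : ℕ}
    (h : (G.induce Iᶜ).Colorable k) : G.Colorable (k + 1) := by
  classical
  obtain ⟨C⟩ := h
  refine ⟨SimpleGraph.Coloring.mk
    (fun v => if hv : v ∈ I then Fin.last k else (C ⟨v, hv⟩).castSucc) ?_⟩
  intro v w hadj
  by_cases hv : v ∈ I <;> by_cases hw : w ∈ I
  · exact absurd hadj (hI v hv w hw)
  · simp only [dif_pos hv, dif_neg hw]
    exact fun hEq => (Fin.castSucc_lt_last (C ⟨w, hw⟩)).ne' hEq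
  · simp only [dif_neg hv, dif_pos hw]
    exact (Fin.castSucc_lt_last (C ⟨v, hv⟩)).ne
  · simp only [dif_neg hv, dif_neg hw]
    intro hEq
    have : (G.induce Iᶜ).Adj ⟨v, hv⟩ ⟨w, hw⟩ := hadj
    exact C.valid this (Fin.castSucc_injective _ hEq)

lemma cliqueNum_induce_le [Fintype V] (G : SimpleGraph V) (s : Set V) :
    (G.induce s).cliqueNum ≤ G.cliqueNum := by
  classical
  obtain ⟨t, ht⟩ := (G.induce s).exists_isNClique_cliqueNum
  have hc : G.IsClique (↑(t.map (Function.Embedding.subtype _)) : Set V) := by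
    intro x hx y hy hxy
    simp only [coe_map, Set.mem_image, mem_coe, Function.Embedding.coe_subtype] at hx hy
    obtain ⟨a, ha, rfl⟩ := hx
    obtain ⟨b, hb, rfl⟩ := hy
    have hab : a ≠ b := fun hEq => hxy (by rw [hEq])
    exact ht.isClique ha hb hab
  calc (G.induce s).cliqueNum = #(t.map (Function.Embedding.subtype _)) := by
        rw [Finset.card_map, ht.card_eq]
    _ ≤ G.cliqueNum := SimpleGraph.IsClique.card_le_cliqueNum (tc := hc)

lemma degree_induce_add_one_le [Fintype V] (G : SimpleGraph V) [DecidableRel G.Adj]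
    (s : Set V) [DecidablePred (· ∈ s)] [DecidableEq V] (v : ↥s) (w : V) (hw : w ∉ s)
    (hadj : G.Adj ↑v w) :
    letI : DecidableRel (G.induce s).Adj := fun a b => ‹DecidableRel G.Adj› a.1 b.1
    (G.induce s).degree v + 1 ≤ G.degree ↑v := by
  letI : DecidableRel (G.induce s).Adj := fun a b => ‹DecidableRel G.Adj› a.1 b.1
  have hsub : ((G.induce s).neighborFinset v).image (Subtype.val) ⊆
      (G.neighborFinset ↑v).erase w := by
    intro x hx
    simp only [mem_image, SimpleGraph.mem_neighborFinset] at hx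
    obtain ⟨a, ha, rfl⟩ := hx
    rw [Finset.mem_erase, SimpleGraph.mem_neighborFinset]
    exact ⟨fun hEq => hw (hEq ▸ a.2), ha⟩
  have hcard : (G.induce s).degree v ≤ ((G.neighborFinset ↑v).erase w).card := by
    have hinj := Finset.card_image_of_injective ((G.induce s).neighborFinset v) Subtype.val_injective
    calc (G.induce s).degree v = (((G.induce s).neighborFinset v).image Subtype.val).card := by
          rw [hinj]; rfl
      _ ≤ ((G.neighborFinset ↑v).erase w).card := Finset.card_le_card hsub
  have hwmem : w ∈ G.neighborFinset ↑v := by rwa [SimpleGraph.mem_neighborFinset]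
  have h2 := Finset.card_erase_add_one hwmem
  have h3 : G.degree ↑v = (G.neighborFinset ↑v).card := rfl
  omega

lemma sum_card_filter_comm [Fintype V] [DecidableEq V] (A B : Finset V) (r : V → V → Prop)
    [DecidableRel r] :
    ∑ a ∈ A, (B.filter (fun b => r a b)).card = ∑ b ∈ B, (A.filter (fun a => r a b)).card := by
  simp_rw [Finset.card_filter]
  exact Finset.sum_comm

section Swaps

variable [Fintype V] [DecidableEq V] (G : SimpleGraph V) (f : V → V)

/-- swapping two nonadjacent fixed points into a pair contradicts maximality -/
lemma swap2 (hinv : ∀ v, f (f v) = v) (hnadj : ∀ v, f v ≠ v → ¬ G.Adj v (f v))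
    (hmax : ∀ g : V → V, (∀ v, g (g v) = v) → (∀ v, g v ≠ v → ¬ G.Adj v (g v)) →
      (univ.filter (fun v => g v ≠ v)).card ≤ (univ.filter (fun v => f v ≠ v)).card)
    {a b : V} (ha : f a = a) (hb : f b = b) (hab : a ≠ b) (hnab : ¬ G.Adj a b) : False := by
  set g : V → V := fun v => if v = a then b else if v = b then a else f v with hg
  have hga : g a = b := by simp [hg]
  have hgb : g b = a := by simp [hg, hab.symm]
  have hother : ∀ v, v ≠ a → v ≠ b → g v = f v := by
    intro v h1 h2; simp [hg, h1, h2]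
  have hfnea : ∀ v, v ≠ a → f v ≠ a := by
    intro v h1 hEq
    exact h1 (by rw [← hinv v, hEq, ha])
  have hfneb : ∀ v, v ≠ b → f v ≠ b := by
    intro v h1 hEq
    exact h1 (by rw [← hinv v, hEq, hb])
  have hginv : ∀ v, g (g v) = v := by
    intro v
    by_cases h1 : v = a
    · rw [h1, hga, hgb]
    by_cases h2 : v = b
    · rw [h2, hgb, hga]
    · rw [hother v h1 h2, hother _ (hfnea v h1) (hfneb v h2), hinv]
  have hgnadj : ∀ v, g v ≠ v → ¬ G.Adj v (g v) := by
    intro v hv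
    by_cases h1 : v = a
    · rw [h1, hga]; exact hnab
    by_cases h2 : v = b
    · rw [h2, hgb]; exact fun h => hnab h.symm
    · rw [hother v h1 h2]
      rw [hother v h1 h2] at hv
      exact hnadj v hv
  have hsub : (univ.filter (fun v => f v ≠ v)) ∪ {a, b} ⊆ univ.filter (fun v => g v ≠ v) := by
    intro v hv
    rcases Finset.mem_union.mp hv with hv | hv
    · rw [Finset.mem_filter] at hv ⊢
      refine ⟨Finset.mem_univ _, ?_⟩
      by_cases h1 : v = a
      · exact absurd (h1 ▸ ha) (h1 ▸ hv.2)
      by_cases h2 : v = b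
      · exact absurd (h2 ▸ hb) (h2 ▸ hv.2)
      · rw [hother v h1 h2]; exact hv.2
    · rw [Finset.mem_insert, Finset.mem_singleton] at hv
      rw [Finset.mem_filter]
      rcases hv with rfl | rfl
      · exact ⟨Finset.mem_univ _, by rw [hga]; exact hab.symm⟩
      · exact ⟨Finset.mem_univ _, by rw [hgb]; exact hab⟩
  have hdisj : Disjoint (univ.filter (fun v => f v ≠ v)) ({a, b} : Finset V) := by
    rw [Finset.disjoint_right]
    intro v hv hv2
    rw [Finset.mem_insert, Finset.mem_singleton] at hv
    rw [Finset.mem_filter] at hv2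
    rcases hv with rfl | rfl
    · exact hv2.2 ha
    · exact hv2.2 hb
  have hcard2 : ({a, b} : Finset V).card = 2 := by
    rw [Finset.card_insert_of_notMem (by simpa using hab), Finset.card_singleton]
  have := Finset.card_le_card hsub
  rw [Finset.card_union_of_disjoint hdisj, hcard2] at this
  have := hmax g hginv hgnadj
  omega

end Swaps
section Swaps4
variable [Fintype V] [DecidableEq V] (G : SimpleGraph V) (f : V → V)

lemma swap4 (hinv : ∀ v, f (f v) = v) (hnadj : ∀ v, f v ≠ v → ¬ G.Adj v (f v))
    (hmax : ∀ g : V → V, (∀ v, g (g v) = v) → (∀ v, g v ≠ v → ¬ G.Adj v (g v)) →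
      (univ.filter (fun v => g v ≠ v)).card ≤ (univ.filter (fun v => f v ≠ v)).card)
    {x a b : V} (hx : f x ≠ x) (ha : f a = a) (hb : f b = b) (hab : a ≠ b)
    (hxa : ¬ G.Adj x a) (hyb : ¬ G.Adj (f x) b) : False := by
  set y := f x with hy
  have hfy : f y = x := hinv x
  have hyx : y ≠ x := hx
  have hax : a ≠ x := fun h => hx (by rw [hy, ← h]; exact ha)
  have hay : a ≠ y := by
    intro h
    rw [h] at ha
    exact hyx (by rw [← hfy, ha])
  have hbx : b ≠ x := fun h => hx (by rw [hy, ← h]; exact hb)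
  have hby : b ≠ y := by
    intro h
    rw [h] at hb
    exact hyx (by rw [← hfy, hb])
  set g : V → V := fun v => if v = x then a else if v = a then x else
      if v = y then b else if v = b then y else f v with hg
  have hgx : g x = a := by simp [hg]
  have hga : g a = x := by simp [hg, hax]
  have hgy : g y = b := by simp [hg, hyx, hay.symm]
  have hgb : g b = y := by simp [hg, hbx, hab.symm, hby]
  have hother : ∀ v, v ≠ x → v ≠ a → v ≠ y → v ≠ b → g v = f v := by
    intro v h1 h2 h3 h4; simp [hg, h1, h2, h3, h4]
  have hfne : ∀ v, v ≠ x → v ≠ a → v ≠ y → v ≠ b →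
      f v ≠ x ∧ f v ≠ a ∧ f v ≠ y ∧ f v ≠ b := by
    intro v h1 h2 h3 h4
    refine ⟨?_, ?_, ?_, ?_⟩
    · intro hEq; exact h3 (by rw [← hinv v, hEq, ← hy])
    · intro hEq; exact h2 (by rw [← hinv v, hEq, ha])
    · intro hEq; exact h1 (by rw [← hinv v, hEq, hfy])
    · intro hEq; exact h4 (by rw [← hinv v, hEq, hb])
  have hginv : ∀ v, g (g v) = v := by
    intro v
    by_cases h1 : v = x
    · rw [h1, hgx, hga]
    by_cases h2 : v = a
    · rw [h2, hga, hgx]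
    by_cases h3 : v = y
    · rw [h3, hgy, hgb]
    by_cases h4 : v = b
    · rw [h4, hgb, hgy]
    · obtain ⟨k1, k2, k3, k4⟩ := hfne v h1 h2 h3 h4
      rw [hother v h1 h2 h3 h4, hother _ k1 k2 k3 k4, hinv]
  have hgnadj : ∀ v, g v ≠ v → ¬ G.Adj v (g v) := by
    intro v hv
    by_cases h1 : v = x
    · rw [h1, hgx]; exact hxa
    by_cases h2 : v = a
    · rw [h2, hga]; exact fun h => hxa h.symm
    by_cases h3 : v = y
    · rw [h3, hgy]; exact hyb
    by_cases h4 : v = b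
    · rw [h4, hgb]; exact fun h => hyb h.symm
    · rw [hother v h1 h2 h3 h4]
      rw [hother v h1 h2 h3 h4] at hv
      exact hnadj v hv
  have hsub : (univ.filter (fun v => f v ≠ v)) ∪ {a, b} ⊆ univ.filter (fun v => g v ≠ v) := by
    intro v hv
    rw [Finset.mem_filter]
    refine ⟨Finset.mem_univ _, ?_⟩
    rcases Finset.mem_union.mp hv with hv | hv
    · rw [Finset.mem_filter] at hv
      by_cases h1 : v = x
      · rw [h1, hgx]; exact hax
      by_cases h2 : v = a
      · exact absurd (h2 ▸ ha) (h2 ▸ hv.2)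
      by_cases h3 : v = y
      · rw [h3, hgy]; exact hby
      by_cases h4 : v = b
      · exact absurd (h4 ▸ hb) (h4 ▸ hv.2)
      · rw [hother v h1 h2 h3 h4]; exact hv.2
    · rw [Finset.mem_insert, Finset.mem_singleton] at hv
      rcases hv with rfl | rfl
      · rw [hga]; exact hax.symm
      · rw [hgb]; exact hby.symm
  have hdisj : Disjoint (univ.filter (fun v => f v ≠ v)) ({a, b} : Finset V) := by
    rw [Finset.disjoint_right]
    intro v hv hv2
    rw [Finset.mem_insert, Finset.mem_singleton] at hv
    rw [Finset.mem_filter] at hv2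
    rcases hv with rfl | rfl
    · exact hv2.2 ha
    · exact hv2.2 hb
  have hcard2 : ({a, b} : Finset V).card = 2 := by
    rw [Finset.card_insert_of_notMem (by simpa using hab), Finset.card_singleton]
  have h5 := Finset.card_le_card hsub
  rw [Finset.card_union_of_disjoint hdisj, hcard2] at h5
  have := hmax g hginv hgnadj
  omega

end Swaps4
lemma base_case [Fintype V] (G : SimpleGraph V) [DecidableRel G.Adj]
    (H3 : ∀ a b c : V, a ≠ b → a ≠ c → b ≠ c →
      ¬G.Adj a b → ¬G.Adj a c → ¬G.Adj b c → False) :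
    4 * G.chromaticNumber.toNat ≤ Fintype.card V + G.maxDegree + 1 + 2 * G.cliqueNum := by
  classical
  rcases isEmpty_or_nonempty V with hV | hV
  · rw [G.chromaticNumber_eq_zero_of_isEmpty]; simp
  set n := Fintype.card V with hn
  -- clique helper
  have hcliq : ∀ Q : Finset V, (∀ x ∈ Q, ∀ y ∈ Q, x ≠ y → G.Adj x y) → Q.card ≤ G.cliqueNum := by
    intro Q hQ
    exact SimpleGraph.IsClique.card_le_cliqueNum
      (tc := fun x hx y hy hxy => hQ x (Finset.mem_coe.mp hx) y (Finset.mem_coe.mp hy) hxy)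
  -- choose a maximum valid involution
  obtain ⟨f, ⟨hinv, hnadj⟩, hmax⟩ :
      ∃ f : V → V, ((∀ v, f (f v) = v) ∧ ∀ v, f v ≠ v → ¬ G.Adj v (f v)) ∧
        ∀ g : V → V, (∀ v, g (g v) = v) → (∀ v, g v ≠ v → ¬ G.Adj v (g v)) →
          (univ.filter (fun v => g v ≠ v)).card ≤ (univ.filter (fun v => f v ≠ v)).card := by
    obtain ⟨f, hf, hmax⟩ := Finset.exists_max_image
      (univ.filter (fun g : V → V => (∀ v, g (g v) = v) ∧ ∀ v, g v ≠ v → ¬ G.Adj v (g v)))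
      (fun g => (univ.filter (fun v => g v ≠ v)).card)
      ⟨id, by simp⟩
    rw [Finset.mem_filter] at hf
    exact ⟨f, hf.2, fun g h1 h2 => hmax g (Finset.mem_filter.mpr ⟨Finset.mem_univ _, h1, h2⟩)⟩
  set U : Finset V := univ.filter (fun v => f v = v) with hU
  set S : Finset V := univ.filter (fun v => f v ≠ v) with hS
  have hUS : U.card + S.card = n := by
    rw [hU, hS, hn]
    exact Finset.card_filter_add_card_filter_not _
  have hUmem : ∀ {v}, v ∈ U ↔ f v = v := by
    intro v; rw [hU, Finset.mem_filter]; simp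
  have hSmem : ∀ {v}, v ∈ S ↔ f v ≠ v := by
    intro v; rw [hS, Finset.mem_filter]; simp
  -- U is a clique
  have hUclique : ∀ a ∈ U, ∀ b ∈ U, a ≠ b → G.Adj a b := by
    intro a ha b hb hab
    by_contra hnab
    exact swap2 G f hinv hnadj hmax (hUmem.mp ha) (hUmem.mp hb) hab hnab
  set W : Finset V := univ.filter (fun v => ∀ a ∈ U, a ≠ v → G.Adj v a) with hW
  have hWmem : ∀ {v}, v ∈ W ↔ ∀ a ∈ U, a ≠ v → G.Adj v a := by
    intro v; rw [hW, Finset.mem_filter]; simp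
  have hUW : U ⊆ W := by
    intro a ha
    rw [hWmem]
    intro b hb hba
    exact hUclique a ha b hb hba.symm
  -- each pair has an endpoint in W
  have hpair : ∀ x, f x ≠ x → (x ∈ W ∨ f x ∈ W) := by
    intro x hx
    by_contra hcon
    push_neg at hcon
    obtain ⟨h1, h2⟩ := hcon
    rw [hWmem] at h1 h2
    push_neg at h1 h2
    obtain ⟨a, haU, hax, hxa⟩ := h1
    obtain ⟨b, hbU, hbfx, hfxb⟩ := h2
    have hfa := hUmem.mp haU
    have hfb := hUmem.mp hbU
    by_cases hab : a = b
    · subst hab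
      -- independent triple x, f x, a
      have hafx : a ≠ f x := hbfx
      exact H3 x (f x) a (Ne.symm hx) (Ne.symm hax) (Ne.symm hafx)
        (hnadj x hx) hxa hfxb
    · exact swap4 G f hinv hnadj hmax hx hfa hfb hab hxa hfxb
  -- the coloring via representatives
  letI : LinearOrder V := linearOrderOfSTO WellOrderingRel
  set rep : V → V := fun v => min v (f v) with hrep
  set R : Finset V := univ.image rep with hR
  have hrep_self : ∀ v, rep v = v ∨ rep v = f v := fun v => min_choice _ _
  have hrep_pair : ∀ v, rep (f v) = rep v := by
    intro v
    rw [hrep]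
    simp only
    rw [hinv, min_comm]
  have hcol : G.Colorable R.card := by
    have C : G.Coloring {x // x ∈ R} := by
      refine SimpleGraph.Coloring.mk
        (fun v => ⟨rep v, Finset.mem_image_of_mem rep (Finset.mem_univ v)⟩) ?_
      intro v w hadj hEq
      rw [Subtype.mk_eq_mk] at hEq
      have hvw : v ≠ w := hadj.ne
      rcases hrep_self v with h1 | h1 <;> rcases hrep_self w with h2 | h2 <;>
        rw [h1, h2] at hEq
      · exact hvw hEq
      · -- v = f w
        have hwfw : f w ≠ w := by
          intro h; rw [h] at hEq; exact hvw hEq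
        exact hnadj w hwfw (hEq ▸ hadj.symm)
      · have hvfv : f v ≠ v := by
          intro h; rw [h] at hEq; exact hvw hEq
        exact hnadj v hvfv (hEq ▸ hadj)
      · have := congrArg f hEq
        rw [hinv, hinv] at this
        exact hvw this
    have := C.colorable
    rwa [Fintype.card_coe] at this
  have hchi : G.chromaticNumber.toNat ≤ R.card := toNat_chromaticNumber_le hcol
  -- 2 * R.card ≤ n + U.card
  have h2R : 2 * R.card ≤ n + U.card := by
    have hRsub : R ⊆ U ∪ S.image rep := by
      intro x hx
      rw [hR, Finset.mem_image] at hx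
      obtain ⟨v, _, rfl⟩ := hx
      by_cases hfv : f v = v
      · apply Finset.mem_union_left
        rw [hUmem]
        have : rep v = v := by rw [hrep]; simp only; rw [hfv, min_self]
        rw [this]; exact hfv
      · exact Finset.mem_union_right _ (Finset.mem_image_of_mem rep (hSmem.mpr hfv))
    have h1 : R.card ≤ U.card + (S.image rep).card :=
      le_trans (Finset.card_le_card hRsub) (Finset.card_union_le _ _)
    have h2 : 2 * (S.image rep).card ≤ S.card := by
      have hfib := Finset.card_eq_sum_card_fiberwise
        (fun x (hx : x ∈ S) => Finset.mem_image_of_mem rep hx)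
      rw [hfib]
      have : ∀ b ∈ S.image rep, 2 ≤ (S.filter (fun x => rep x = b)).card := by
        intro b hb
        rw [Finset.mem_image] at hb
        obtain ⟨v, hv, rfl⟩ := hb
        have hfvS : f v ∈ S := by
          rw [hSmem]
          rw [hSmem] at hv
          intro h; exact hv (by rw [← hinv v, h, h])
        have hsub2 : ({v, f v} : Finset V) ⊆ S.filter (fun x => rep x = rep v) := by
          intro z hz
          rw [Finset.mem_insert, Finset.mem_singleton] at hz
          rcases hz with rfl | rfl
          · exact Finset.mem_filter.mpr ⟨hv, rfl⟩
          · exact Finset.mem_filter.mpr ⟨hfvS, hrep_pair v⟩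
        have hc2 : ({v, f v} : Finset V).card = 2 := by
          rw [Finset.card_insert_of_notMem (by simpa using (Ne.symm (hSmem.mp hv))),
            Finset.card_singleton]
        calc 2 = ({v, f v} : Finset V).card := hc2.symm
          _ ≤ _ := Finset.card_le_card hsub2
      calc 2 * (S.image rep).card = ∑ _b ∈ S.image rep, 2 := by
            rw [Finset.sum_const, smul_eq_mul, mul_comm]
        _ ≤ ∑ b ∈ S.image rep, (S.filter (fun x => rep x = b)).card :=
            Finset.sum_le_sum this
      -- orientation check
    omega
    -- main counting inequality
  have hkey : n + 2 * U.card ≤ G.maxDegree + 1 + 2 * G.cliqueNum := by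
    set nn : V → Finset V → Finset V :=
      fun v X => X.filter (fun x => x ≠ v ∧ ¬ G.Adj v x) with hnn
    have hnn_clique : ∀ v X, ∀ x ∈ nn v X, ∀ y ∈ nn v X, x ≠ y → G.Adj x y := by
      intro v X x hx y hy hxy
      rw [hnn] at hx hy
      rw [Finset.mem_filter] at hx hy
      by_contra hcon
      exact H3 v x y (Ne.symm hx.2.1) (Ne.symm hy.2.1) hxy hx.2.2 hy.2.2 hcon
    have hnn_count : ∀ v, n ≤ G.degree v + 1 + (nn v univ).card := by
      intro v
      have hsub : (univ : Finset V) ⊆ insert v (G.neighborFinset v ∪ nn v univ) := by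
        intro w _
        rw [Finset.mem_insert]
        by_cases h1 : w = v
        · left; exact h1
        right
        rw [Finset.mem_union]
        by_cases h2 : G.Adj v w
        · left; rwa [SimpleGraph.mem_neighborFinset]
        · right; exact Finset.mem_filter.mpr ⟨Finset.mem_univ _, h1, h2⟩
      have h1 := Finset.card_le_card hsub
      have h2 := Finset.card_insert_le v (G.neighborFinset v ∪ nn v univ)
      have h3 := Finset.card_union_le (G.neighborFinset v) (nn v univ)
      have h4 : (G.neighborFinset v).card = G.degree v := rfl
      have h5 : (univ : Finset V).card = n := by rw [hn]; exact Finset.card_univ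
      omega
    have hdeg : ∀ v, G.degree v ≤ G.maxDegree := G.degree_le_maxDegree
    by_cases hU0 : U.card = 0
    · obtain ⟨v⟩ := hV
      have h1 := hnn_count v
      have h2 := hcliq (nn v univ) (hnn_clique v univ)
      have h3 := hdeg v
      omega
    · set W' : Finset V := W \ U with hW'
      set D : Finset V := univ \ W with hD
      have hDcard : D.card ≤ W'.card := by
        apply Finset.card_le_card_of_injOn f
        · intro d hd
          rw [Finset.mem_coe, Finset.mem_sdiff] at hd
          have hdW := hd.2
          have hfd : f d ≠ d := fun h => hdW (hUW (hUmem.mpr h))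
          rcases hpair d hfd with h | h
          · exact absurd h hdW
          · rw [Finset.mem_coe, hW', Finset.mem_sdiff]
            refine ⟨h, ?_⟩
            rw [hUmem, hinv]
            exact Ne.symm hfd
        · intro x _ y _ hEq
          rw [← hinv x, hEq, hinv]
      by_cases hW'0 : W' = ∅
      · have hSempty : S = ∅ := by
          rw [Finset.eq_empty_iff_forall_notMem]
          intro x hxS
          have hfx := hSmem.mp hxS
          rcases hpair x hfx with h | h
          · have hmem : x ∈ W' := by
              rw [hW', Finset.mem_sdiff]
              exact ⟨h, fun hxU => hfx (hUmem.mp hxU)⟩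
            rw [hW'0] at hmem
            exact absurd hmem (Finset.notMem_empty x)
          · have hfxU : f x ∉ U := by rw [hUmem, hinv]; exact Ne.symm hfx
            have hmem : f x ∈ W' := by rw [hW', Finset.mem_sdiff]; exact ⟨h, hfxU⟩
            rw [hW'0] at hmem
            exact absurd hmem (Finset.notMem_empty _)
        have hS0 : S.card = 0 := by rw [hSempty]; rfl
        have hUn : U.card = n := by omega
        have hUuniv : U = univ := Finset.eq_univ_of_card U (by rw [hUn, hn])
        have hωn : n ≤ G.cliqueNum := by
          have := hcliq U hUclique
          omega
        have hΔn : n ≤ G.maxDegree + 1 := by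
          obtain ⟨v⟩ := hV
          have h1 := hnn_count v
          have h2 : nn v univ = ∅ := by
            rw [Finset.eq_empty_iff_forall_notMem]
            intro x hx
            rw [hnn, Finset.mem_filter] at hx
            exact hx.2.2 (hUclique v (hUuniv ▸ Finset.mem_univ v)
              x (hUuniv ▸ Finset.mem_univ x) (Ne.symm hx.2.1))
          rw [h2] at h1
          simp only [Finset.card_empty] at h1
          have h3 := hdeg v
          omega
        omega
      · have hW'ne : W'.Nonempty := Finset.nonempty_of_ne_empty hW'0
        have hnnW : ∀ w ∈ W, ∀ x ∈ nn w univ, x ∈ W' ∨ x ∈ D := by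
          intro w hw x hx
          rw [hnn, Finset.mem_filter] at hx
          obtain ⟨-, hxw, hnadjwx⟩ := hx
          have hxU : x ∉ U := fun hxU => hnadjwx (hWmem.mp hw x hxU hxw)
          by_cases hxW : x ∈ W
          · left; rw [hW', Finset.mem_sdiff]; exact ⟨hxW, hxU⟩
          · right; rw [hD, Finset.mem_sdiff]; exact ⟨Finset.mem_univ _, hxW⟩
        have hsplit : ∀ w ∈ W, (nn w univ).card ≤ (nn w W').card + (nn w D).card := by
          intro w hw
          have hsub : nn w univ ⊆ nn w W' ∪ nn w D := by
            intro x hx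
            have hcond := Finset.mem_filter.mp hx
            rcases hnnW w hw x hx with h | h
            · exact Finset.mem_union_left _ (Finset.mem_filter.mpr ⟨h, hcond.2⟩)
            · exact Finset.mem_union_right _ (Finset.mem_filter.mpr ⟨h, hcond.2⟩)
          exact le_trans (Finset.card_le_card hsub) (Finset.card_union_le _ _)
        have hfinish : ∀ T : Finset V, T ⊆ W' → (∀ x ∈ T, ∀ y ∈ T, x ≠ y → G.Adj x y) →
            n ≤ G.maxDegree + 1 + 2 * T.card →
            n + 2 * U.card ≤ G.maxDegree + 1 + 2 * G.cliqueNum := by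
          intro T hTW' hTclique hTn
          have hdisj : Disjoint U T := by
            rw [Finset.disjoint_left]
            intro x hxU hxT
            have hmem := hTW' hxT
            rw [hW', Finset.mem_sdiff] at hmem
            exact hmem.2 hxU
          have hQclique : ∀ x ∈ U ∪ T, ∀ y ∈ U ∪ T, x ≠ y → G.Adj x y := by
            intro x hx y hy hxy
            rw [Finset.mem_union] at hx hy
            rcases hx with hx | hx <;> rcases hy with hy | hy
            · exact hUclique x hx y hy hxy
            · have hyW : y ∈ W := by
                have := hTW' hy; rw [hW', Finset.mem_sdiff] at this; exact this.1
              exact (hWmem.mp hyW x hx hxy).symm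
            · have hxW : x ∈ W := by
                have := hTW' hx; rw [hW', Finset.mem_sdiff] at this; exact this.1
              exact hWmem.mp hxW y hy (Ne.symm hxy)
            · exact hTclique x hx y hy hxy
          have hQ := hcliq (U ∪ T) hQclique
          rw [Finset.card_union_of_disjoint hdisj] at hQ
          omega
        by_cases hA : ∃ w ∈ W', n ≤ G.maxDegree + 1 + 2 * (nn w W').card
        · obtain ⟨w, hwW', hwn⟩ := hA
          exact hfinish (nn w W') (Finset.filter_subset _ _) (hnn_clique w W') hwn
        · by_cases hB : ∃ d ∈ D, n ≤ G.maxDegree + 1 + 2 * (nn d W').card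
          · obtain ⟨d, hdD, hdn⟩ := hB
            exact hfinish (nn d W') (Finset.filter_subset _ _) (hnn_clique d W') hdn
          · exfalso
            push_neg at hA hB
            have hperW : ∀ w ∈ W', n + 1 ≤ G.maxDegree + 1 + 2 * (nn w D).card := by
              intro w hwW'
              have hwW : w ∈ W := by rw [hW', Finset.mem_sdiff] at hwW'; exact hwW'.1
              have h1 := hnn_count w
              have h2 := hsplit w hwW
              have h3 := hA w hwW'
              have h4 := hdeg w
              omega
            have hperD : ∀ d ∈ D, G.maxDegree + 2 + 2 * (nn d W').card ≤ n := by
              intro d hd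
              have := hB d hd
              omega
            have hsum1 : W'.card * (n + 1) ≤
                W'.card * (G.maxDegree + 1) + 2 * (∑ w ∈ W', (nn w D).card) := by
              have h1 := Finset.sum_le_sum hperW
              rw [Finset.sum_const, smul_eq_mul] at h1
              calc W'.card * (n + 1) ≤ ∑ w ∈ W', (G.maxDegree + 1 + 2 * (nn w D).card) := h1
                _ = W'.card * (G.maxDegree + 1) + 2 * (∑ w ∈ W', (nn w D).card) := by
                    rw [Finset.sum_add_distrib, Finset.sum_const, smul_eq_mul, Finset.mul_sum]
            have hsum2 : D.card * (G.maxDegree + 2) + 2 * (∑ d ∈ D, (nn d W').card) ≤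
                D.card * n := by
              have h1 := Finset.sum_le_sum hperD
              rw [Finset.sum_const, smul_eq_mul] at h1
              calc D.card * (G.maxDegree + 2) + 2 * (∑ d ∈ D, (nn d W').card)
                  = ∑ d ∈ D, (G.maxDegree + 2 + 2 * (nn d W').card) := by
                    rw [Finset.sum_add_distrib, Finset.sum_const, smul_eq_mul, Finset.mul_sum]
                _ ≤ D.card * n := h1
            have hswap : ∑ w ∈ W', (nn w D).card = ∑ d ∈ D, (nn d W').card := by
              have hcomm := sum_card_filter_comm W' D (fun a b => b ≠ a ∧ ¬ G.Adj a b)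
              calc ∑ w ∈ W', (nn w D).card
                  = ∑ a ∈ W', (D.filter (fun b => b ≠ a ∧ ¬ G.Adj a b)).card := rfl
                _ = ∑ b ∈ D, (W'.filter (fun a => b ≠ a ∧ ¬ G.Adj a b)).card := hcomm
                _ = ∑ d ∈ D, (nn d W').card := by
                    apply Finset.sum_congr rfl
                    intro d _
                    congr 1
                    apply Finset.filter_congr
                    intro a _
                    constructor
                    · rintro ⟨h1, h2⟩
                      exact ⟨Ne.symm h1, fun h => h2 h.symm⟩
                    · rintro ⟨h1, h2⟩
                      exact ⟨Ne.symm h1, fun h => h2 h.symm⟩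
            rw [hswap] at hsum1
            have hm1 : 1 ≤ W'.card := Finset.card_pos.mpr hW'ne
            have hΔ2 : G.maxDegree + 2 ≤ n := by
              obtain ⟨w, hw⟩ := hW'ne
              have := hA w hw
              omega
            obtain ⟨e, he⟩ : ∃ e, n = G.maxDegree + 2 + e := ⟨n - (G.maxDegree + 2), by omega⟩
            have hde : D.card * e ≤ W'.card * e := Nat.mul_le_mul_right e hDcard
            rw [he] at hsum1 hsum2
            zify at hsum1 hsum2 hde hm1
            nlinarith [hsum1, hsum2, hde, hm1]
  omega

lemma key : ∀ (N : ℕ) {V : Type u} [Fintype V] (G : SimpleGraph V) [inst : DecidableRel G.Adj],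
    Fintype.card V ≤ N →
    4 * G.chromaticNumber.toNat ≤ Fintype.card V + G.maxDegree + 1 + 2 * G.cliqueNum := by
  intro N
  induction N with
  | zero =>
    intro V _ G _ hN
    have hemp : IsEmpty V := by
      rw [← Fintype.card_eq_zero_iff]
      omega
    rw [G.chromaticNumber_eq_zero_of_isEmpty]
    simp
  | succ N ih =>
    intro V _ G instDec hN
    classical
    by_cases H3 : ∃ a b c : V, a ≠ b ∧ a ≠ c ∧ b ≠ c ∧ ¬G.Adj a b ∧ ¬G.Adj a c ∧ ¬G.Adj b c
    · obtain ⟨a, b, c, hab, hac, hbc, nab, nac, nbc⟩ := H3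
      have nba : ¬ G.Adj b a := fun h => nab h.symm
      have nca : ¬ G.Adj c a := fun h => nac h.symm
      have ncb : ¬ G.Adj c b := fun h => nbc h.symm
      set indep : Finset V → Prop := fun J => ∀ x ∈ J, ∀ y ∈ J, x ≠ y → ¬ G.Adj x y with hindep
      have habc_card : ({a, b, c} : Finset V).card = 3 := by
        rw [Finset.card_insert_of_notMem (by simp [hab, hac]),
          Finset.card_insert_of_notMem (by simp [hbc]), Finset.card_singleton]
      have habc_indep : indep {a, b, c} := by
        intro x hx y hy hxy
        simp only [Finset.mem_insert, Finset.mem_singleton] at hx hy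
        rcases hx with rfl | rfl | rfl <;> rcases hy with rfl | rfl | rfl <;>
          first
            | exact absurd rfl hxy
            | assumption
      obtain ⟨I, hI, hImax⟩ := Finset.exists_max_image
        (univ.powerset.filter (fun J => ({a, b, c} : Finset V) ⊆ J ∧ indep J))
        (fun J => J.card)
        ⟨{a, b, c}, by
          rw [Finset.mem_filter]
          exact ⟨Finset.mem_powerset.mpr (Finset.subset_univ _), le_refl _, habc_indep⟩⟩
      rw [Finset.mem_filter] at hI
      obtain ⟨-, habcI, hIindep⟩ := hI
      have hI3 : 3 ≤ I.card := habc_card ▸ Finset.card_le_card habcI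
      have hImaximal : ∀ v, v ∉ I → ∃ w ∈ I, G.Adj v w := by
        intro v hv
        by_contra hcon
        push_neg at hcon
        have hins : indep (insert v I) := by
          intro x hx y hy hxy
          rw [Finset.mem_insert] at hx hy
          rcases hx with rfl | hx <;> rcases hy with rfl | hy
          · exact absurd rfl hxy
          · exact hcon y hy
          · exact fun h => hcon x hx h.symm
          · exact hIindep x hx y hy hxy
        have hmem : insert v I ∈ univ.powerset.filter
            (fun J => ({a, b, c} : Finset V) ⊆ J ∧ indep J) := by
          rw [Finset.mem_filter]
          exact ⟨Finset.mem_powerset.mpr (Finset.subset_univ _),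
            habcI.trans (Finset.subset_insert _ _), hins⟩
        have := hImax _ hmem
        rw [Finset.card_insert_of_notMem hv] at this
        omega
      by_cases hIuniv : I = univ
      · have hcol : G.Colorable 1 := by
          refine ⟨SimpleGraph.Coloring.mk (fun _ => 0) ?_⟩
          intro v w hadj
          exact absurd hadj (hIindep v (hIuniv ▸ Finset.mem_univ v)
            w (hIuniv ▸ Finset.mem_univ w) hadj.ne)
        have hchi := toNat_chromaticNumber_le hcol
        have hω : 1 ≤ G.cliqueNum := by
          have hclA : G.IsClique (↑({a} : Finset V) : Set V) := by
            simp
          have := SimpleGraph.IsClique.card_le_cliqueNum (tc := hclA)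
          simpa using this
        have hcard3 : 3 ≤ Fintype.card V := by
          have := Finset.card_le_card (Finset.subset_univ I)
          rw [Finset.card_univ] at this
          omega
        omega
      · -- peel off the maximal independent set I
        set Sset : Set V := (↑I : Set V)ᶜ with hSset
        have hnonemptyS : Nonempty ↥Sset := by
          have hex : ∃ v, v ∉ I := by
            by_contra hcon
            push_neg at hcon
            exact hIuniv (Finset.eq_univ_iff_forall.mpr hcon)
          obtain ⟨v, hv⟩ := hex
          exact ⟨⟨v, fun hm => hv (Finset.mem_coe.mp hm)⟩⟩
        letI instDS : DecidableRel (G.induce Sset).Adj := fun x y => instDec x.1 y.1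
        have hveq : Fintype.card ↥Sset + I.card = Fintype.card V := by
          have h1 : Fintype.card ↥Sset = Fintype.card {x : V // ¬ x ∈ I} := by
            apply Fintype.card_congr
            apply Equiv.subtypeEquivRight
            intro x
            simp only [hSset, Set.mem_compl_iff, Finset.mem_coe]
          have h2 : Fintype.card {x : V // x ∈ I} = I.card := Fintype.card_coe I
          have h3 := Fintype.card_subtype_compl (fun x : V => x ∈ I)
          have h4 : I.card ≤ Fintype.card V := by
            have := Finset.card_le_card (Finset.subset_univ I)
            rwa [Finset.card_univ] at this
          omega
        have hIindep' : ∀ x ∈ (↑I : Set V), ∀ y ∈ (↑I : Set V), ¬ G.Adj x y := by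
          intro x hx y hy
          by_cases hxy : x = y
          · subst hxy
            exact fun h => G.irrefl h
          · exact hIindep x (Finset.mem_coe.mp hx) y (Finset.mem_coe.mp hy) hxy
        have hcol' := (G.induce Sset).colorable_chromaticNumber_of_fintype
        have hcolG : G.Colorable ((G.induce Sset).chromaticNumber.toNat + 1) :=
          colorable_of_induce_compl G (↑I : Set V) hIindep' (hSset ▸ hcol')
        have hchi : G.chromaticNumber.toNat ≤ (G.induce Sset).chromaticNumber.toNat + 1 :=
          toNat_chromaticNumber_le hcolG
        have hΔ : (G.induce Sset).maxDegree + 1 ≤ G.maxDegree := by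
          obtain ⟨v, hv⟩ := (G.induce Sset).exists_maximal_degree_vertex
          have hvnotI : ↑v ∉ I := fun hIv => v.2 (Finset.mem_coe.mpr hIv)
          obtain ⟨w, hwI, hadj⟩ := hImaximal ↑v hvnotI
          have hwS : w ∉ Sset := fun hmem => hmem (Finset.mem_coe.mpr hwI)
          have hstep := degree_induce_add_one_le G Sset v w hwS hadj
          have hdm := G.degree_le_maxDegree (↑v : V)
          rw [hv]
          omega
        have hω := cliqueNum_induce_le G Sset
        have hcardle : Fintype.card ↥Sset ≤ N := by omega
        have hIH := ih (G.induce Sset) hcardle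
        omega
    · push_neg at H3
      apply base_case G
      intro a b c h1 h2 h3 h4 h5 h6
      exact h6 (H3 a b c h1 h2 h3 h4 h5)

end ChromBound

/-- `χ(G) ≤ (1/2)(ω(G) + (|G| + Δ(G) + 1)/2)`. -/
theorem chromaticNumber_le_half_cliqueNum_add_quarter {V : Type*} [Fintype V] [Nonempty V]
    (G : SimpleGraph V) [DecidableRel G.Adj] :
    (G.chromaticNumber.toNat : ℝ) ≤
      (1 / 2) * ((G.cliqueNum : ℝ) + ((Fintype.card V : ℝ) + G.maxDegree + 1) / 2) := by
  have h := ChromBound.key (Fintype.card V) G (le_refl _)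
  have h2 : (4 * G.chromaticNumber.toNat : ℝ) ≤
      (Fintype.card V : ℝ) + G.maxDegree + 1 + 2 * G.cliqueNum := by
    exact_mod_cast h
  linarith
end

section
/- Let G be a finite simple graph and t a half-integer. If χ(G) > (1/2)(ω(G) + Δ(G) + 1) + t, then Δ(G) + 1 ≤ |G| - 2t - α(G). -/
open Finset SimpleGraph

universe u

section Aux

variable {V : Type u}

lemma my_toNat_chrom_le [Fintype V] {G : SimpleGraph V} {k : ℕ} (h : G.Colorable k) :
    G.chromaticNumber.toNat ≤ k := by
  have h1 := h.chromaticNumber_le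
  have := ENat.toNat_le_toNat h1 (by simp)
  simpa using this

lemma my_one_le_cliqueNum [Fintype V] [Nonempty V] (G : SimpleGraph V) :
    1 ≤ G.cliqueNum := by
  obtain ⟨v⟩ := ‹Nonempty V›
  have hc : G.IsClique (↑({v} : Finset V)) := by
    simp [SimpleGraph.IsClique]
  have := SimpleGraph.IsClique.card_le_cliqueNum (tc := hc)
  simpa using this

lemma my_cliqueNum_le_of_embedding {α β : Type*} [Fintype α] [Fintype β]
    {G : SimpleGraph α} {H : SimpleGraph β} (f : G ↪g H) : G.cliqueNum ≤ H.cliqueNum := by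
  classical
  obtain ⟨s, hs⟩ := G.exists_isNClique_cliqueNum
  have hc : H.IsClique ↑(s.map f.toEmbedding) := by
    rintro a ha b hb hab
    simp only [Finset.coe_map, Set.mem_image, Finset.mem_coe] at ha hb
    obtain ⟨x, hx, rfl⟩ := ha
    obtain ⟨y, hy, rfl⟩ := hb
    exact f.toHom.map_adj (hs.isClique hx hy (fun h => hab (by rw [h])))
  have := SimpleGraph.IsClique.card_le_cliqueNum (tc := hc)
  calc G.cliqueNum = s.card := hs.card_eq.symm
    _ = (s.map f.toEmbedding).card := (Finset.card_map _).symm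
    _ ≤ H.cliqueNum := this

lemma my_card_le_cliqueNum_induce [Fintype V] {G : SimpleGraph V} {s t : Finset V}
    (hts : t ⊆ s) (ht : G.IsClique ↑t) :
    t.card ≤ (G.induce (↑s : Set V)).cliqueNum := by
  classical
  set t' : Finset ↥(↑s : Set V) :=
    t.attach.map ⟨fun x => ⟨x.1, hts x.2⟩, fun a b h => Subtype.ext (by have := congrArg Subtype.val h; exact this)⟩
    with ht'
  have hc : (G.induce (↑s : Set V)).IsClique ↑t' := by
    rintro ⟨a, has⟩ ha ⟨b, hbs⟩ hb hab
    simp only [ht', Finset.coe_map, Set.mem_image, Finset.mem_coe, Finset.mem_attach,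
      Function.Embedding.coeFn_mk] at ha hb
    obtain ⟨⟨x, hx⟩, -, hxa⟩ := ha
    obtain ⟨⟨y, hy⟩, -, hyb⟩ := hb
    have hax : x = a := congrArg Subtype.val hxa
    have hby : y = b := congrArg Subtype.val hyb
    subst hax hby
    have hne : x ≠ y := fun hh => hab (Subtype.ext hh)
    exact ht hx hy hne
  have := SimpleGraph.IsClique.card_le_cliqueNum (tc := hc)
  calc t.card = t'.card := by simp [ht']
    _ ≤ _ := this

lemma my_induce_compl [Fintype V] (G : SimpleGraph V) (s : Set V) :
    (G.induce s)ᶜ = Gᶜ.induce s := by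
  ext a b
  simp only [SimpleGraph.compl_adj, SimpleGraph.comap_adj, Function.Embedding.coe_subtype,
    ne_eq, Subtype.ext_iff]

end Aux

open Finset SimpleGraph


section Key
variable {V : Type u}

lemma my_colorable_pair [Fintype V] [DecidableEq V] {G : SimpleGraph V} {u v : V}
    (huv : ¬ G.Adj u v) {k : ℕ}
    (h : (G.induce (↑(univ \ {u, v} : Finset V) : Set V)).Colorable k) :
    G.Colorable (k + 1) := by
  obtain ⟨c⟩ := h
  refine ⟨⟨fun x => if hx : x ∈ (univ \ {u, v} : Finset V)
      then (c ⟨x, by exact_mod_cast hx⟩).castSucc else Fin.last k, ?_⟩⟩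
  intro a b hadj
  by_cases ha : a ∈ (univ \ {u, v} : Finset V) <;>
    by_cases hb : b ∈ (univ \ {u, v} : Finset V) <;>
    simp only [ha, hb, dif_pos, dif_neg, not_false_iff]
  · intro hcc
    have h1 : c ⟨a, by exact_mod_cast ha⟩ = c ⟨b, by exact_mod_cast hb⟩ :=
      Fin.castSucc_injective _ hcc
    exact c.valid (by exact hadj) h1
  · exact (Fin.castSucc_lt_last _).ne
  · exact (Fin.castSucc_lt_last _).ne.symm
  · exfalso
    simp only [Finset.mem_sdiff, Finset.mem_univ, true_and, Finset.mem_insert,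
      Finset.mem_singleton, not_not] at ha hb
    rcases ha with rfl | rfl <;> rcases hb with rfl | rfl
    · exact hadj.ne rfl
    · exact huv hadj
    · exact huv hadj.symm
    · exact hadj.ne rfl

end Key

open Finset SimpleGraph


section KeyLemma
variable {V : Type u}

lemma my_key : ∀ (n : ℕ) (V : Type u) (_ : Fintype V) (G : SimpleGraph V) (_ : Nonempty V),
    Fintype.card V = n →
    2 * G.chromaticNumber.toNat + Gᶜ.cliqueNum ≤ Fintype.card V + G.cliqueNum + 1 := by
  intro n
  induction n using Nat.strong_induction_on with
  | _ n IH =>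
  intro V hV G hne hcard
  classical
  obtain ⟨S, hS⟩ := Gᶜ.exists_isNClique_cliqueNum
  have hScard : S.card = Gᶜ.cliqueNum := hS.card_eq
  have hSind : ∀ a ∈ S, ∀ b ∈ S, a ≠ b → ¬ G.Adj a b := by
    intro a ha b hb hab
    exact (hS.isClique ha hb hab).2
  have hα1 : 1 ≤ Gᶜ.cliqueNum := my_one_le_cliqueNum _
  have hω1 : 1 ≤ G.cliqueNum := my_one_le_cliqueNum _
  have hCS : (univ \ S).card + S.card = Fintype.card V := by
    rw [card_sdiff_of_subset (subset_univ S)]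
    have h1 : S.card ≤ (univ : Finset V).card := card_le_card (subset_univ _)
    simp only [card_univ] at h1 ⊢
    omega
  by_cases hA : ∀ u ∈ univ \ S, ∀ v ∈ univ \ S, u ≠ v → G.Adj u v
  · -- the complement of S is a clique
    have hCclique : G.IsClique ↑(univ \ S) := fun a ha b hb hab => hA a ha b hb hab
    by_cases hi : ∃ x ∈ S, ∀ w ∈ univ \ S, G.Adj x w
    · obtain ⟨x, hxS, hx⟩ := hi
      have hxC : x ∉ univ \ S := by simp [hxS]
      have hclq : G.IsClique ↑(insert x (univ \ S)) := by
        intro a ha b hb hab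
        simp only [coe_insert, Set.mem_insert_iff, mem_coe] at ha hb
        rcases ha with rfl | ha <;> rcases hb with rfl | hb
        · exact absurd rfl hab
        · exact hx b hb
        · exact (hx a ha).symm
        · exact hA a ha b hb hab
      have hω : (univ \ S).card + 1 ≤ G.cliqueNum := by
        have := SimpleGraph.IsClique.card_le_cliqueNum (tc := hclq)
        rwa [card_insert_of_notMem hxC] at this
      have hcol : G.chromaticNumber.toNat ≤ (univ \ S).card + 1 := by
        have col : G.Coloring (Option ↥(univ \ S : Finset V)) := by
          refine ⟨fun y => if hy : y ∈ univ \ S then some ⟨y, hy⟩ else none, ?_⟩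
          intro a b hadj heq
          by_cases haC : a ∈ univ \ S <;> by_cases hbC : b ∈ univ \ S
          · rw [dif_pos haC, dif_pos hbC] at heq
            exact hadj.ne (congrArg Subtype.val (Option.some_injective _ heq))
          · rw [dif_pos haC, dif_neg hbC] at heq
            exact Option.some_ne_none _ heq
          · rw [dif_neg haC, dif_pos hbC] at heq
            exact Option.some_ne_none _ heq.symm
          · have haS : a ∈ S := by simpa using haC
            have hbS : b ∈ S := by simpa using hbC
            exact hSind a haS b hbS hadj.ne hadj
        have h2 := my_toNat_chrom_le col.colorable
        simp only [Fintype.card_option, Fintype.card_coe] at h2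
        exact h2.trans_eq rfl
      omega
    · push_neg at hi
      by_cases hCne : (univ \ S : Finset V).Nonempty
      · have hsel : ∀ y : V, ∃ w, w ∈ univ \ S ∧ (y ∈ univ \ S → w = y) ∧
            (y ∉ univ \ S → ¬ G.Adj y w) := by
          intro y
          by_cases hy : y ∈ univ \ S
          · exact ⟨y, hy, fun _ => rfl, fun h => absurd hy h⟩
          · have hyS : y ∈ S := by simpa using hy
            obtain ⟨w, hwC, hw⟩ := hi y hyS
            exact ⟨w, hwC, fun h => absurd h hy, fun _ => hw⟩
        choose g hg1 hg2 hg3 using hsel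
        have hχ : G.chromaticNumber.toNat ≤ (univ \ S).card := by
          have col : G.Coloring ↥(univ \ S : Finset V) := by
            refine ⟨fun y => ⟨g y, hg1 y⟩, ?_⟩
            intro a b hadj heq
            have hgab : g a = g b := congrArg Subtype.val heq
            by_cases haC : a ∈ univ \ S <;> by_cases hbC : b ∈ univ \ S
            · exact hadj.ne (by rw [← hg2 a haC, hgab, hg2 b hbC])
            · refine hg3 b hbC ?_
              rw [← hgab, hg2 a haC]
              exact hadj.symm
            · refine hg3 a haC ?_
              rw [hgab, hg2 b hbC]
              exact hadj
            · have haS : a ∈ S := by simpa using haC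
              have hbS : b ∈ S := by simpa using hbC
              exact absurd hadj (hSind a haS b hbS hadj.ne)
          have h2 := my_toNat_chrom_le col.colorable
          simp only [Fintype.card_coe] at h2
          exact h2
        have hω : (univ \ S).card ≤ G.cliqueNum :=
          SimpleGraph.IsClique.card_le_cliqueNum (tc := hCclique)
        omega
      · -- S = univ : the graph has no edges
        have hallS : ∀ y : V, y ∈ S := by
          intro y
          by_contra hy
          exact hCne ⟨y, mem_sdiff.mpr ⟨mem_univ y, hy⟩⟩
        have hcol : G.Colorable 1 := by
          refine ⟨⟨fun _ => 0, ?_⟩⟩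
          intro a b hadj _
          exact hSind a (hallS a) b (hallS b) hadj.ne hadj
        have hχ := my_toNat_chrom_le hcol
        omega
  · push_neg at hA
    obtain ⟨u, huC, v, hvC, huv, hnadj⟩ := hA
    have huS : u ∉ S := (mem_sdiff.mp huC).2
    have hvS : v ∉ S := (mem_sdiff.mp hvC).2
    have hSs : S ⊆ univ \ {u, v} := by
      intro x hx
      refine mem_sdiff.mpr ⟨mem_univ x, ?_⟩
      simp only [mem_insert, mem_singleton]
      rintro (rfl | rfl)
      · exact huS hx
      · exact hvS hx
    have hscard : (univ \ ({u, v} : Finset V)).card + 2 = Fintype.card V := by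
      rw [card_sdiff_of_subset (subset_univ _), card_pair huv]
      have h1 : ({u, v} : Finset V).card ≤ (univ : Finset V).card :=
        card_le_card (subset_univ _)
      rw [card_pair huv] at h1
      simp only [card_univ] at h1 ⊢
      omega
    have hSne : S.Nonempty := by
      rw [← card_pos, hScard]; exact hα1
    obtain ⟨x₀, hx₀⟩ := hSne
    have hne' : Nonempty ↥(↑(univ \ ({u, v} : Finset V)) : Set V) :=
      ⟨⟨x₀, by exact_mod_cast hSs hx₀⟩⟩
    have hcard' : Fintype.card ↥(↑(univ \ ({u, v} : Finset V)) : Set V) =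
        (univ \ ({u, v} : Finset V)).card := by
      rw [← Fintype.card_coe (univ \ ({u, v} : Finset V))]
      exact Fintype.card_congr (Equiv.subtypeEquivRight (by intro x; simp))
    have hIH := IH (univ \ ({u, v} : Finset V)).card (by omega)
      ↥(↑(univ \ ({u, v} : Finset V)) : Set V) inferInstance
      (G.induce (↑(univ \ ({u, v} : Finset V)) : Set V)) hne' hcard'
    have hω' : (G.induce (↑(univ \ ({u, v} : Finset V)) : Set V)).cliqueNum ≤ G.cliqueNum :=
      my_cliqueNum_le_of_embedding (SimpleGraph.Embedding.induce _)
    have hα' : Gᶜ.cliqueNum ≤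
        (G.induce (↑(univ \ ({u, v} : Finset V)) : Set V))ᶜ.cliqueNum := by
      rw [my_induce_compl, ← hScard]
      exact my_card_le_cliqueNum_induce hSs hS.isClique
    have hχ : G.chromaticNumber.toNat ≤
        (G.induce (↑(univ \ ({u, v} : Finset V)) : Set V)).chromaticNumber.toNat + 1 := by
      have hc' := (G.induce (↑(univ \ ({u, v} : Finset V)) : Set V)).colorable_chromaticNumber_of_fintype
      exact my_toNat_chrom_le (my_colorable_pair hnadj hc')
    omega

end KeyLemma

/-- If `t` is a half-integer and `χ(G) > (1/2)(ω(G) + Δ(G) + 1) + t`, then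
`Δ(G) + 1 ≤ |G| - 2t - α(G)`. -/
theorem maxDegree_bound_of_reed_violation_half_integer {V : Type*} [Fintype V] [Nonempty V]
    (G : SimpleGraph V) [DecidableRel G.Adj] (t : ℝ) (ht : ∃ z : ℤ, t = (z : ℝ) / 2)
    (h : (1 / 2) * ((G.cliqueNum : ℝ) + G.maxDegree + 1) + t < G.chromaticNumber.toNat) :
    (G.maxDegree : ℝ) + 1 ≤ (Fintype.card V : ℝ) - 2 * t - Gᶜ.cliqueNum := by
  obtain ⟨z, rfl⟩ := ht
  have hL := my_key (Fintype.card V) V inferInstance G inferInstance rfl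
  have h2 : ((G.cliqueNum : ℝ) + G.maxDegree + 1) + z <
      2 * (G.chromaticNumber.toNat : ℝ) := by linarith
  have h3 : (G.cliqueNum : ℤ) + G.maxDegree + 1 + z < 2 * G.chromaticNumber.toNat := by
    exact_mod_cast h2
  have hL' : 2 * (G.chromaticNumber.toNat : ℤ) + Gᶜ.cliqueNum ≤
      Fintype.card V + G.cliqueNum + 1 := by exact_mod_cast hL
  have h5 : (G.maxDegree : ℤ) + 1 ≤ (Fintype.card V : ℤ) - z - Gᶜ.cliqueNum := by omega
  have h6 : (G.maxDegree : ℝ) + 1 ≤ (Fintype.card V : ℝ) - z - Gᶜ.cliqueNum := by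
    exact_mod_cast h5
  linarith
end
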